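/- arXiv:1111.3073 — 5 statements merged into one kernel-verified Lean document; each statement's English description precedes it below -/
import Mathlib

section
/- A random variable Y is measurable with respect to G^τ_t = F_t ∨ σ(τ) if and only if there exists an F_t ⊗ B(ℝ⁺)-measurable function y_t(ω, u) such that Y(ω) = y_t(ω, τ(ω)). -/
/-! `F_t ∨ σ(τ)` is the pullback of `F_t ⊗ B(ℝ⁺)` along the graph map `ω ↦ (ω, τ ω)`, so the
statement is the Doob–Dynkin lemma for that map. -/

open MeasureTheory
open scoped NNReal

namespace MeasurableSpace

theorem comap_prodMk_id_eq_sup {Ω E : Type*} (m : MeasurableSpace Ω) (mE : MeasurableSpace E)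
    (τ : Ω → E) : (m.prod mE).comap (fun ω => (ω, τ ω)) = m ⊔ mE.comap τ := by
  rw [MeasurableSpace.prod, comap_sup, comap_comp, comap_comp]
  exact congrArg (· ⊔ mE.comap τ) (comap_id (m := m))

end MeasurableSpace

theorem measurable_comap_iff_exists_eq_comp {X Y Z : Type*} {mY : MeasurableSpace Y}
    [MeasurableSpace Z] [Nonempty Z] [StandardBorelSpace Z] {f : X → Y} {g : X → Z} :
    Measurable[mY.comap f] g ↔ ∃ h : Y → Z, Measurable h ∧ g = h ∘ f := by
  refine ⟨Measurable.exists_eq_measurable_comp, ?_⟩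
  rintro ⟨h, hh, rfl⟩
  exact hh.comp (comap_measurable f)

theorem measurable_sup_comap_iff_exists_eq_comp_prodMk {Ω E Z : Type*}
    [MeasurableSpace Z] [Nonempty Z] [StandardBorelSpace Z]
    (m : MeasurableSpace Ω) (mE : MeasurableSpace E) (τ : Ω → E) (Y : Ω → Z) :
    Measurable[m ⊔ mE.comap τ] Y ↔
      ∃ y : Ω × E → Z, Measurable[m.prod mE] y ∧ ∀ ω, Y ω = y (ω, τ ω) := by
  rw [← MeasurableSpace.comap_prodMk_id_eq_sup, measurable_comap_iff_exists_eq_comp]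
  simp only [funext_iff, Function.comp_apply]

theorem stmt1_general {Ω : Type*} {mΩ : MeasurableSpace Ω}
    (F : Filtration ℝ≥0 mΩ) (τ : Ω → ℝ≥0)
    (t : ℝ≥0) (Y : Ω → ℝ) :
    Measurable[F t ⊔ MeasurableSpace.comap τ inferInstance] Y ↔
      ∃ y : Ω × ℝ≥0 → ℝ, Measurable[(F t).prod inferInstance] y ∧
        ∀ ω, Y ω = y (ω, τ ω) :=
  measurable_sup_comap_iff_exists_eq_comp_prodMk (F t) _ τ Y

/-- A random variable `Y` is `G^τ_t = F_t ∨ σ(τ)`-measurable iff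
`Y ω = y_t(ω, τ ω)` for some `F_t ⊗ B(ℝ⁺)`-measurable function `y_t`. -/
theorem stmt1 {Ω : Type*} {mΩ : MeasurableSpace Ω}
    (F : Filtration ℝ≥0 mΩ) (τ : Ω → ℝ≥0) (hτ : Measurable τ)
    (t : ℝ≥0) (Y : Ω → ℝ) :
    Measurable[F t ⊔ MeasurableSpace.comap τ inferInstance] Y ↔
      ∃ y : Ω × ℝ≥0 → ℝ, Measurable[(F t).prod inferInstance] y ∧
        ∀ ω, Y ω = y (ω, τ ω) :=
  stmt1_general F τ t Y
end

section
/- A random variable Y is measurable with respect to the progressively enlarged σ-field G_t if and only if Y(ω) = ỹ_t(ω) 1_{t < τ(ω)} + ŷ_t(ω, τ(ω)) 1_{τ(ω) ≤ t}, for some F_t-measurable random variable ỹ_t and some F_t ⊗ B(ℝ⁺)-measurable family ŷ_t(·, u), u ≤ t. -/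
/-!
The indicators `1_{τ ≤ s}`, `s ≤ t`, and the time `τ` censored at `t` (equal to `τ` on
`{τ ≤ t}` and to the dummy value `t + 1` on `{t < τ}`) are functions of one another, so `G_t` is
the σ-algebra pulled back from `F_t ⊗ B(ℝ≥0)` by `ω ↦ (ω, censored τ)`. By the Doob–Dynkin
lemma, `Y` is `G_t`-measurable iff it is a measurable function of this pair; splitting that
function along `{u ≤ t}` gives `ỹ_t` and `ŷ_t`.
-/

open MeasureTheory Set
open scoped NNReal

namespace ProgressiveEnlargement

variable {Ω : Type*} (τ : Ω → ℝ≥0) (t : ℝ≥0)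

noncomputable abbrev history : MeasurableSpace Ω :=
  ⨆ s ∈ Iic t, MeasurableSpace.comap (fun ω => if τ ω ≤ s then (1 : ℝ) else 0) inferInstance

noncomputable def censor (ω : Ω) : ℝ≥0 := if τ ω ≤ t then τ ω else t + 1

variable {τ t}

theorem apply_censor {β : Type*} (f : ℝ≥0 → β) (ω : Ω) :
    f (censor τ t ω) = if t < τ ω then f (t + 1) else f (τ ω) := by
  unfold censor
  by_cases h : τ ω ≤ t <;> simp [h]

theorem ite_censor_le {β : Type*} (yt : Ω → β) (yh : Ω × ℝ≥0 → β) (ω : Ω) :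
    (if censor τ t ω ≤ t then yh (ω, censor τ t ω) else yt ω) =
      if t < τ ω then yt ω else yh (ω, τ ω) := by
  unfold censor
  by_cases h : τ ω ≤ t <;> simp [h]

theorem censor_le_add_one (ω : Ω) : censor τ t ω ≤ t + 1 := by
  unfold censor
  split_ifs with h
  exacts [h.trans le_self_add, le_rfl]

theorem censor_le_iff {c : ℝ≥0} (hc : c < t + 1) (ω : Ω) :
    censor τ t ω ≤ c ↔ τ ω ≤ min c t := by
  unfold censor
  by_cases h : τ ω ≤ t <;> simp [h, hc.not_ge]

theorem measurableSet_history {s : ℝ≥0} (hs : s ≤ t) :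
    MeasurableSet[history τ t] {ω | τ ω ≤ s} := by
  have h : {ω | τ ω ≤ s} = (fun ω => if τ ω ≤ s then (1 : ℝ) else 0) ⁻¹' {1} := by
    ext ω
    by_cases h : τ ω ≤ s <;> simp [h]
  rw [h]
  exact (le_iSup₂ s hs : _ ≤ history τ t) _ ⟨{1}, measurableSet_singleton 1, rfl⟩

theorem history_eq_comap_censor :
    history τ t = MeasurableSpace.comap (censor τ t) inferInstance := by
  apply le_antisymm
  · refine iSup₂_le fun s hs => ?_
    have h : (fun ω => if τ ω ≤ s then (1 : ℝ) else 0)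
        = (fun u : ℝ≥0 => if u ≤ s then (1 : ℝ) else 0) ∘ censor τ t := by
      funext ω
      simp only [Function.comp_apply,
        censor_le_iff (hs.trans_lt (lt_add_one t)), min_eq_left (show s ≤ t from hs)]
    rw [h, ← MeasurableSpace.comap_comp]
    exact MeasurableSpace.comap_mono
      (Measurable.ite measurableSet_Iic measurable_const measurable_const).comap_le
  · refine Measurable.comap_le (measurable_of_Iic fun c => ?_)
    by_cases hc : t + 1 ≤ c
    · have h : censor τ t ⁻¹' Iic c = univ :=
        eq_univ_of_forall fun ω => (censor_le_add_one ω).trans hc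
      rw [h]
      exact MeasurableSet.univ
    · have h : censor τ t ⁻¹' Iic c = {ω | τ ω ≤ min c t} :=
        ext fun ω => censor_le_iff (not_le.1 hc) ω
      rw [h]
      exact measurableSet_history (min_le_right c t)

theorem sup_history_eq_comap (m : MeasurableSpace Ω) :
    m ⊔ history τ t =
      MeasurableSpace.comap (fun ω => (ω, censor τ t ω)) (m.prod inferInstance) := by
  rw [MeasurableSpace.comap_prodMk]
  exact congrArg₂ _ MeasurableSpace.comap_id.symm history_eq_comap_censor

theorem measurable_ite_snd_le {m : MeasurableSpace Ω} {β : Type*} [MeasurableSpace β]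
    {yt : Ω → β} {yh : Ω × ℝ≥0 → β} (hyt : Measurable[m] yt)
    (hyh : Measurable[m.prod inferInstance] yh) :
    Measurable[m.prod inferInstance] fun p : Ω × ℝ≥0 => if p.2 ≤ t then yh p else yt p.1 :=
  Measurable.ite (measurable_snd measurableSet_Iic) hyh (hyt.comp measurable_fst)

end ProgressiveEnlargement

open ProgressiveEnlargement in
theorem stmt2_general {Ω : Type*} {mΩ : MeasurableSpace Ω}
    (F : Filtration ℝ≥0 mΩ) (τ : Ω → ℝ≥0)
    (t : ℝ≥0) (Y : Ω → ℝ) :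
    Measurable[F t ⊔ ⨆ s ∈ Set.Iic t,
        MeasurableSpace.comap (fun ω => if τ ω ≤ s then (1 : ℝ) else 0) inferInstance] Y ↔
      ∃ (yt : Ω → ℝ) (yh : Ω × ℝ≥0 → ℝ),
        Measurable[F t] yt ∧ Measurable[(F t).prod inferInstance] yh ∧
        ∀ ω, Y ω = if t < τ ω then yt ω else yh (ω, τ ω) := by
  change Measurable[F t ⊔ history τ t] Y ↔ _
  rw [sup_history_eq_comap]
  constructor
  · intro hY
    obtain ⟨y, hy, rfl⟩ := hY.exists_eq_measurable_comp (mY := (F t).prod inferInstance)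
    exact ⟨fun ω => y (ω, t + 1), y, hy.comp measurable_prodMk_right, hy,
      fun ω => apply_censor (fun u => y (ω, u)) ω⟩
  · rintro ⟨yt, yh, hyt, hyh, hY⟩
    have hY' : Y = (fun p : Ω × ℝ≥0 => if p.2 ≤ t then yh p else yt p.1) ∘
        fun ω => (ω, censor τ t ω) :=
      funext fun ω => (hY ω).trans (ite_censor_le yt yh ω).symm
    rw [hY']
    exact (measurable_ite_snd_le hyt hyh).comp (comap_measurable _)

/-- A random variable `Y` is measurable w.r.t. the progressively enlarged
σ-field `G_t = F_t ∨ H_t`, where `H_t = σ(1_{τ ≤ s}, s ≤ t)`, iff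
`Y ω = ỹ_t(ω) 1_{t < τ(ω)} + ŷ_t(ω, τ(ω)) 1_{τ(ω) ≤ t}` for some `F_t`-measurable `ỹ_t`
and some `F_t ⊗ B(ℝ⁺)`-measurable family `ŷ_t`. -/
theorem stmt2 {Ω : Type*} {mΩ : MeasurableSpace Ω}
    (F : Filtration ℝ≥0 mΩ) (τ : Ω → ℝ≥0) (hτ : Measurable τ)
    (t : ℝ≥0) (Y : Ω → ℝ) :
    Measurable[F t ⊔ ⨆ s ∈ Set.Iic t,
        MeasurableSpace.comap (fun ω => if τ ω ≤ s then (1 : ℝ) else 0) inferInstance] Y ↔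
      ∃ (yt : Ω → ℝ) (yh : Ω × ℝ≥0 → ℝ),
        Measurable[F t] yt ∧ Measurable[(F t).prod inferInstance] yh ∧
        ∀ ω, Y ω = if t < τ ω then yt ω else yh (ω, τ ω) :=
  stmt2_general F τ t Y
end

section
/- Under P*, where τ is independent of F_∞ and P* = P on each F_t, one has for s ≤ t and y_t(τ) a P*-integrable G^τ_t-measurable random variable: E*(y_t(τ) | G^τ_s) = E*(y_t(u) | F_s)|_{u = τ} = E(y_t(u) | F_s)|_{u = τ}, P-almost surely. -/
/-!
Since `τ` is independent of `F t` under `μs`, the pair `(ω, τ ω)`, with `ω` observed through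
`F t`, has law `μs|F t ⊗ law(τ)`, and `G^τ_s = F s ∨ σ(τ)` is the pull-back of `F s ⊗ B(ℝ≥0)`
under `ω ↦ (ω, τ ω)`. On a product measure, conditioning on `F s ⊗ B(ℝ≥0)` is done slice by slice,
so `E*(y(·, τ) | G^τ_s)` is `E*(y(·, u) | F s)` evaluated at `u = τ`, provided the slice-wise
conditional expectations are chosen jointly measurable in `(ω, u)`. Such a choice is made by a
monotone class argument: for an indicator of a rectangle `A × B` it is `1_B(u) E(1_A | F s)`,
Dynkin's π-λ theorem gives all measurable sets, and countable sums give all nonnegative functions.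
As `μ` and `μs` agree on `F t`, one version serves both measures.
-/

open MeasureTheory ProbabilityTheory Set
open scoped NNReal ENNReal

theorem Measurable.ennreal_induction_tsum {α : Type*} [MeasurableSpace α]
    {motive : (α → ℝ≥0∞) → Prop}
    (indicator : ∀ (c : ℝ≥0∞) ⦃s : Set α⦄, MeasurableSet s → motive (s.indicator fun _ ↦ c))
    (add : ∀ ⦃f g : α → ℝ≥0∞⦄, Measurable f → Measurable g → motive f → motive g →
      motive (f + g))
    (tsum : ∀ ⦃f : ℕ → α → ℝ≥0∞⦄, (∀ n, Measurable (f n)) → (∀ n, motive (f n)) →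
      motive (∑' n, f n))
    ⦃f : α → ℝ≥0∞⦄ (hf : Measurable f) : motive f := by
  have simple (s : SimpleFunc α ℝ≥0) : motive fun x ↦ (s x : ℝ≥0∞) := by
    induction s using SimpleFunc.induction with
    | @const c s hs =>
      convert indicator c hs using 1
      ext x
      by_cases hx : x ∈ s <;> simp [hx]
    | add _ hf hg =>
      convert add (SimpleFunc.measurable _).coe_nnreal_ennreal
        (SimpleFunc.measurable _).coe_nnreal_ennreal hf hg using 1
      ext x
      simp
  convert tsum (fun n ↦ (SimpleFunc.eapproxDiff f n).measurable.coe_nnreal_ennreal)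
    fun n ↦ simple _
  ext x
  rw [ENNReal.tsum_apply, SimpleFunc.tsum_eapproxDiff f hf x]

lemma MeasurableSpace.prod_mono_left {α β : Type*} {m m' : MeasurableSpace α} (h : m ≤ m')
    (mβ : MeasurableSpace β) : m.prod mβ ≤ m'.prod mβ :=
  sup_le_sup_right (MeasurableSpace.comap_mono h) _

theorem setIntegral_eq_of_isPiSystem {α E : Type*} [NormedAddCommGroup E] [NormedSpace ℝ E]
    {m mα : MeasurableSpace α} {μ : Measure[mα] α} (hm : m ≤ mα) {p : Set (Set α)}
    (hgen : m = MeasurableSpace.generateFrom p) (hp : IsPiSystem p) (huniv : univ ∈ p)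
    {f g : α → E} (hf : Integrable f μ) (hg : Integrable g μ)
    (heq : ∀ s ∈ p, ∫ x in s, f x ∂μ = ∫ x in s, g x ∂μ) {s : Set α}
    (hs : MeasurableSet[m] s) : ∫ x in s, f x ∂μ = ∫ x in s, g x ∂μ := by
  induction s, hs using MeasurableSpace.induction_on_inter hgen hp with
  | empty => simp
  | basic s hs => exact heq s hs
  | compl s hs ih =>
    have huniv_eq := heq univ huniv
    rw [setIntegral_univ, setIntegral_univ] at huniv_eq
    rw [setIntegral_compl (hm s hs) hf, setIntegral_compl (hm s hs) hg, ih, huniv_eq]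
  | iUnion s hdisj hs ih =>
    rw [integral_iUnion (fun n ↦ hm _ (hs n)) hdisj hf.integrableOn,
      integral_iUnion (fun n ↦ hm _ (hs n)) hdisj hg.integrableOn]
    exact tsum_congr ih

section

variable {Ω β : Type*} [MeasurableSpace β] {m mΩ : MeasurableSpace Ω} {μ : Measure[mΩ] Ω}

/-- `G` is a version of `u ↦ μ⁻[Y(·, u)|m]` that is jointly measurable for `m ⊗ B(β)`; versions
chosen separately for each `u` need not be. -/
def IsSliceCondLExp (m : MeasurableSpace Ω) (μ : Measure[mΩ] Ω) (Y G : Ω × β → ℝ≥0∞) : Prop :=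
  Measurable[m.prod inferInstance] G ∧ ∀ u, (fun ω ↦ G (ω, u)) =ᵐ[μ] μ⁻[fun ω ↦ Y (ω, u)|m]

namespace IsSliceCondLExp

variable {Y Z G H : Ω × β → ℝ≥0∞}

lemma indicator_prod {A : Set Ω} {B : Set β} (hB : MeasurableSet B) :
    IsSliceCondLExp m μ ((A ×ˢ B).indicator 1)
      (fun p ↦ B.indicator 1 p.2 * μ⁻[A.indicator 1|m] p.1) := by
  refine ⟨((measurable_one.indicator hB).comp measurable_snd).mul
    ((measurable_condLExp m μ _).comp measurable_fst), fun u ↦ ?_⟩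
  by_cases hu : u ∈ B
  · simp [hu, indicator_prod_one]
  · simp only [indicator_prod_one, indicator_of_notMem hu, zero_mul, mul_zero]
    rw [← Pi.zero_def, condLExp_zero]

lemma const_smul (hY : Measurable Y) (h : IsSliceCondLExp m μ Y G) (c : ℝ≥0∞) :
    IsSliceCondLExp m μ (c • Y) (c • G) :=
  ⟨h.1.const_smul c, fun u ↦ ((h.2 u).const_smul c).trans
    (condLExp_smul _ (hY.comp measurable_prodMk_right).aemeasurable c).symm⟩

lemma add (hY : Measurable Y) (hYG : IsSliceCondLExp m μ Y G) (hZH : IsSliceCondLExp m μ Z H) :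
    IsSliceCondLExp m μ (Y + Z) (G + H) :=
  ⟨hYG.1.add hZH.1, fun u ↦ ((hYG.2 u).add (hZH.2 u)).trans
    (condLExp_add_left _ (hY.comp measurable_prodMk_right).aemeasurable).symm⟩

lemma tsum {Y G : ℕ → Ω × β → ℝ≥0∞} (hY : ∀ n, Measurable (Y n))
    (h : ∀ n, IsSliceCondLExp m μ (Y n) (G n)) :
    IsSliceCondLExp m μ (∑' n, Y n) (∑' n, G n) := by
  refine ⟨?_, fun u ↦ ?_⟩
  · let : MeasurableSpace (Ω × β) := m.prod inferInstance
    exact Measurable.tsum' fun n ↦ (h n).1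
  · have := condLExp_tsum m (P := μ) (X := fun n ω ↦ Y n (ω, u)) fun n ↦
      ((hY n).comp measurable_prodMk_right).aemeasurable
    have hslice : (fun ω ↦ (∑' n, Y n) (ω, u)) = ∑' n, fun ω ↦ Y n (ω, u) := by
      ext; simp only [ENNReal.tsum_apply]
    rw [hslice]
    filter_upwards [ae_all_iff.2 fun n ↦ (h n).2 u, this] with ω hG hY
    rw [hY, ENNReal.tsum_apply, ENNReal.tsum_apply]
    exact tsum_congr hG

lemma one_sub (hm : m ≤ mΩ) [SigmaFinite (μ.trim hm)] (hY : Measurable Y) (hY1 : Y ≤ 1)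
    (h : IsSliceCondLExp m μ Y G) : IsSliceCondLExp m μ (1 - Y) (1 - G) := by
  refine ⟨measurable_const.sub h.1, fun u ↦ ?_⟩
  set X := fun ω ↦ Y (ω, u)
  have hX : Measurable X := hY.comp measurable_prodMk_right
  have hle : μ⁻[X|m] ≤ᵐ[μ] 1 := by
    rw [← condLExp_one hm μ]
    exact condLExp_mono (ae_of_all _ fun ω ↦ hY1 _)
  have hsum : μ⁻[X + (1 - X)|m] =ᵐ[μ] μ⁻[X|m] + μ⁻[1 - X|m] :=
    condLExp_add_left _ hX.aemeasurable
  rw [add_tsub_cancel_of_le (fun ω ↦ hY1 _), condLExp_one hm] at hsum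
  filter_upwards [h.2 u, hle, hsum] with ω hG hle hsum
  simp only [Pi.sub_apply, Pi.one_apply, hG]
  exact ENNReal.sub_eq_of_eq_add_rev (ne_top_of_le_ne_top ENNReal.one_ne_top hle) hsum

end IsSliceCondLExp

lemma exists_isSliceCondLExp_indicator (hm : m ≤ mΩ) [SigmaFinite (μ.trim hm)]
    {S : Set (Ω × β)} (hS : MeasurableSet S) : ∃ G, IsSliceCondLExp m μ (S.indicator 1) G := by
  induction S, hS using
    MeasurableSpace.induction_on_inter generateFrom_prod.symm isPiSystem_prod with
  | empty =>
    refine ⟨0, measurable_const, fun u ↦ ?_⟩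
    simp only [indicator_empty, Pi.zero_apply]
    rw [← Pi.zero_def, condLExp_zero]
  | basic _ hS =>
    obtain ⟨A, -, B, hB, rfl⟩ := hS
    exact ⟨_, IsSliceCondLExp.indicator_prod hB⟩
  | compl S hS ih =>
    obtain ⟨G, hG⟩ := ih
    refine ⟨1 - G, ?_⟩
    convert hG.one_sub hm (measurable_one.indicator hS) (fun p ↦ by
      by_cases hp : p ∈ S <;> simp [hp]) using 1
    ext p
    by_cases hp : p ∈ S <;> simp [hp]
  | iUnion S hdisj hS ih =>
    choose G hG using ih
    refine ⟨∑' n, G n, ?_⟩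
    convert IsSliceCondLExp.tsum (fun n ↦ measurable_one.indicator (hS n)) hG using 1
    ext p
    rw [ENNReal.tsum_apply]
    by_cases hp : p ∈ ⋃ n, S n
    · obtain ⟨k, hk⟩ := mem_iUnion.1 hp
      rw [indicator_of_mem hp, tsum_eq_single k fun n hn ↦
        indicator_of_notMem (fun h ↦ disjoint_left.1 (hdisj hn) h hk) _, indicator_of_mem hk]
    · simp only [mem_iUnion, not_exists] at hp
      simp [hp]

theorem exists_isSliceCondLExp (hm : m ≤ mΩ) [SigmaFinite (μ.trim hm)]
    {Y : Ω × β → ℝ≥0∞} (hY : Measurable Y) : ∃ G, IsSliceCondLExp m μ Y G := by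
  refine Measurable.ennreal_induction_tsum (motive := fun Y ↦ ∃ G, IsSliceCondLExp m μ Y G)
    (fun c S hS ↦ ?_) (fun Y Z hY _ hYG hZH ↦ ?_)
    (fun Y hY hYG ↦ ?_) hY
  · obtain ⟨G, hG⟩ := exists_isSliceCondLExp_indicator (μ := μ) hm hS
    refine ⟨c • G, ?_⟩
    convert hG.const_smul (measurable_one.indicator hS) c using 1
    ext p
    by_cases hp : p ∈ S <;> simp [hp]
  · obtain ⟨G, hG⟩ := hYG
    obtain ⟨H, hH⟩ := hZH
    exact ⟨G + H, hG.add hY hH⟩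
  · choose G hG using hYG
    exact ⟨∑' n, G n, IsSliceCondLExp.tsum hY hG⟩

theorem exists_measurable_forall_ae_eq_condExp (hm : m ≤ mΩ) [SigmaFinite (μ.trim hm)]
    {y : Ω × β → ℝ} (hy : Measurable y) (hint : ∀ u, Integrable (fun ω ↦ y (ω, u)) μ) :
    ∃ g : Ω × β → ℝ, Measurable[m.prod inferInstance] g ∧
      ∀ u, (fun ω ↦ g (ω, u)) =ᵐ[μ] μ[fun ω ↦ y (ω, u)|m] := by
  have hposPart {z : Ω × β → ℝ} (hz : Measurable z) (hzint : ∀ u, Integrable (fun ω ↦ z (ω, u)) μ) :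
      ∃ G : Ω × β → ℝ, Measurable[m.prod inferInstance] G ∧
        ∀ u, (fun ω ↦ G (ω, u)) =ᵐ[μ] μ[fun ω ↦ max (z (ω, u)) 0|m] := by
    obtain ⟨G, hG_meas, hG⟩ := exists_isSliceCondLExp (μ := μ)
      (Y := fun p ↦ ENNReal.ofReal (z p)) hm hz.ennreal_ofReal
    refine ⟨fun p ↦ (G p).toReal, hG_meas.ennreal_toReal, fun u ↦ ?_⟩
    have hfin : ∫⁻ ω, ENNReal.ofReal (z (ω, u)) ∂μ ≠ ∞ :=
      ((lintegral_mono fun ω ↦ Real.ofReal_le_enorm _).trans_lt (hzint u).2).ne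
    filter_upwards [hG u, toReal_condLExp m (f := fun ω ↦ ENNReal.ofReal (z (ω, u)))
      (hz.comp measurable_prodMk_right).ennreal_ofReal.aemeasurable hfin] with ω hGω hω
    simp only [ENNReal.toReal_ofReal'] at hω
    rw [hGω, hω]
  obtain ⟨G, hG_meas, hG⟩ := hposPart hy hint
  obtain ⟨H, hH_meas, hH⟩ := hposPart hy.neg fun u ↦ (hint u).neg
  refine ⟨G - H, hG_meas.sub hH_meas, fun u ↦ ?_⟩
  filter_upwards [hG u, hH u, condExp_sub (hint u).pos_part (hint u).neg_part m] with ω hGω hHω h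
  have hdecomp : (fun ω ↦ max (y (ω, u)) 0) - (fun ω ↦ max (-y (ω, u)) 0) = fun ω ↦ y (ω, u) := by
    ext; exact max_zero_sub_max_neg_zero_eq_self _
  simp only [Pi.sub_apply, Pi.neg_apply, hGω, hHω, hdecomp] at h ⊢
  exact h.symm

end

section

variable {α : Type*} {m mα : MeasurableSpace α} {μ : Measure[mα] α} [IsFiniteMeasure μ]

theorem condExp_trim_ae_eq {mt : MeasurableSpace α} (hm : m ≤ mt) (hmt : mt ≤ mα) {f : α → ℝ}
    (hf : StronglyMeasurable[mt] f) :
    (μ.trim hmt)[f|m] =ᵐ[μ] μ[f|m] := by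
  by_cases hfμ : Integrable f μ
  · have hf_trim : Integrable f (μ.trim hmt) := hfμ.trim hmt hf
    refine ae_eq_condExp_of_forall_setIntegral_eq (hm.trans hmt) hfμ
      (fun s _ _ ↦ (integrable_of_integrable_trim hmt integrable_condExp).integrableOn)
      (fun s hs _ ↦ ?_) stronglyMeasurable_condExp.aestronglyMeasurable
    rw [setIntegral_trim hmt (stronglyMeasurable_condExp.mono hm) (hm s hs),
      setIntegral_condExp hm hf_trim hs, ← setIntegral_trim hmt hf (hm s hs)]
  · rw [condExp_of_not_integrable hfμ,
      condExp_of_not_integrable fun h ↦ hfμ (integrable_of_integrable_trim hmt h)]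

theorem condExp_comp_ae_eq {E : Type*} {m' mE : MeasurableSpace E} {Φ : α → E}
    (hΦ : Measurable Φ) (hm : m' ≤ mE) {f : E → ℝ} (hf : Integrable f (μ.map Φ)) :
    μ[f ∘ Φ|m'.comap Φ] =ᵐ[μ] (μ.map Φ)[f|m'] ∘ Φ := by
  have hmΦ : m'.comap Φ ≤ mα := (MeasurableSpace.comap_mono hm).trans hΦ.comap_le
  have hcomp {g : E → ℝ} (hg : Integrable g (μ.map Φ)) : Integrable (g ∘ Φ) μ :=
    (integrable_map_measure hg.1 hΦ.aemeasurable).1 hg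
  have hcond_meas : StronglyMeasurable[mE] ((μ.map Φ)[f|m']) :=
    stronglyMeasurable_condExp.mono hm
  refine (ae_eq_condExp_of_forall_setIntegral_eq hmΦ (hcomp hf)
    (fun s _ _ ↦ (hcomp integrable_condExp).integrableOn) ?_ ?_).symm
  · rintro _ ⟨s, hs, rfl⟩ _
    simp only [Function.comp_apply]
    rw [← setIntegral_map (hm s hs) hcond_meas.aestronglyMeasurable hΦ.aemeasurable,
      setIntegral_condExp hm hf hs, setIntegral_map (hm s hs) hf.1 hΦ.aemeasurable]
  · exact (stronglyMeasurable_condExp.comp_measurable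
      (Measurable.of_comap_le le_rfl)).aestronglyMeasurable

end

theorem condExp_prod_ae_eq {α γ : Type*} {m mα : MeasurableSpace α} [MeasurableSpace γ]
    {ρ : Measure[mα] α} {ν : Measure γ} [IsFiniteMeasure ρ] [IsFiniteMeasure ν] (hm : m ≤ mα)
    {y g : α × γ → ℝ} (hy : Integrable y (ρ.prod ν)) (hg_meas : Measurable[m.prod inferInstance] g)
    (hg : ∀ᵐ u ∂ν, (fun a ↦ g (a, u)) =ᵐ[ρ] ρ[fun a ↦ y (a, u)|m]) :
    (ρ.prod ν)[y|m.prod inferInstance] =ᵐ[ρ.prod ν] g := by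
  have hm' := MeasurableSpace.prod_mono_left hm (inferInstance : MeasurableSpace γ)
  have hg_meas' : Measurable g := hg_meas.mono hm' le_rfl
  have hg_int : Integrable g (ρ.prod ν) := by
    refine ⟨hg_meas'.aestronglyMeasurable, lt_of_le_of_lt ?_ hy.2⟩
    rw [lintegral_prod_symm _ hg_meas'.enorm.aemeasurable, lintegral_prod_symm _ hy.1.enorm]
    refine lintegral_mono_ae (hg.mono fun u hu ↦ ?_)
    calc ∫⁻ a, ‖g (a, u)‖ₑ ∂ρ = ∫⁻ a, ‖ρ[fun a ↦ y (a, u)|m] a‖ₑ ∂ρ :=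
          lintegral_congr_ae (hu.fun_comp _)
      _ ≤ ∫⁻ a, ‖y (a, u)‖ₑ ∂ρ := by
        simpa only [eLpNorm_one_eq_lintegral_enorm] using
          eLpNorm_condExp_le_eLpNorm (m := m) (μ := ρ) (fun a ↦ y (a, u)) le_rfl
  have hslice : ∀ᵐ u ∂ν, ∀ A, MeasurableSet[m] A →
      ∫ a in A, g (a, u) ∂ρ = ∫ a in A, y (a, u) ∂ρ := by
    filter_upwards [hg, hy.prod_left_ae] with u hgu hyu A hA
    rw [setIntegral_congr_ae (hm A hA) (hgu.mono fun a h _ ↦ h), setIntegral_condExp hm hyu hA]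
  refine (ae_eq_condExp_of_forall_setIntegral_eq hm' hy (fun _ _ _ ↦ hg_int.integrableOn)
    (fun S hS _ ↦ ?_) hg_meas.stronglyMeasurable.aestronglyMeasurable).symm
  refine setIntegral_eq_of_isPiSystem hm' (@generateFrom_prod α γ m _).symm
    (@isPiSystem_prod α γ m _) ⟨univ, .univ, univ, .univ, univ_prod_univ⟩ hg_int hy ?_ hS
  rintro _ ⟨A, hA, B, hB, rfl⟩
  have hrestrict := Measure.prod_restrict (μ := ρ) (ν := ν) A B
  rw [← hrestrict, integral_prod_symm _ (by rw [hrestrict]; exact hg_int.restrict),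
    integral_prod_symm _ (by rw [hrestrict]; exact hy.restrict)]
  exact integral_congr_ae (ae_restrict_of_ae (hslice.mono fun u hu ↦ hu A hA))

theorem condExp_comap_sup_comap_ae_eq_of_indepFun {Ω α γ : Type*} {mΩ : MeasurableSpace Ω}
    {m mα : MeasurableSpace α} [MeasurableSpace γ] {μ : Measure Ω} [IsFiniteMeasure μ]
    (hm : m ≤ mα) {X : Ω → α} {τ : Ω → γ} (hX : Measurable X) (hτ : Measurable τ)
    (hindep : IndepFun X τ μ) {y g : α × γ → ℝ} (hy : Measurable y)
    (hint : Integrable (fun ω ↦ y (X ω, τ ω)) μ) (hg_meas : Measurable[m.prod inferInstance] g)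
    (hg : ∀ u, (fun a ↦ g (a, u)) =ᵐ[μ.map X] (μ.map X)[fun a ↦ y (a, u)|m]) :
    μ[fun ω ↦ y (X ω, τ ω)|m.comap X ⊔ MeasurableSpace.comap τ inferInstance]
      =ᵐ[μ] fun ω ↦ g (X ω, τ ω) := by
  have hΦ : Measurable fun ω ↦ (X ω, τ ω) := hX.prodMk hτ
  have hlaw := hindep.map_prod_eq_prod_map_map hX.aemeasurable hτ.aemeasurable
  have hy_int : Integrable y ((μ.map X).prod (μ.map τ)) := by
    rw [← hlaw]
    exact (integrable_map_measure hy.aestronglyMeasurable hΦ.aemeasurable).2 hint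
  rw [← MeasurableSpace.comap_prodMk]
  refine (condExp_comp_ae_eq hΦ (MeasurableSpace.prod_mono_left hm _) (hlaw ▸ hy_int)).trans
    (ae_eq_comp hΦ.aemeasurable ?_)
  rw [hlaw]
  exact condExp_prod_ae_eq hm hy_int hg_meas (ae_of_all _ hg)

theorem stmt4_general {Ω : Type*} {mΩ : MeasurableSpace Ω} (μ μs : Measure Ω)
    [IsProbabilityMeasure μ] [IsProbabilityMeasure μs]
    (F : Filtration ℝ≥0 mΩ) (τ : Ω → ℝ≥0) (hτ : Measurable τ)
    (hindep : ∀ t, ProbabilityTheory.Indep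
      (MeasurableSpace.comap τ inferInstance) (F t) μs)
    (hagreeF : ∀ t, ∀ s : Set Ω, MeasurableSet[F t] s → μs s = μ s)
    (𝒢τ : Filtration ℝ≥0 mΩ)
    (h𝒢τ : ∀ r, 𝒢τ r = F r ⊔ MeasurableSpace.comap τ inferInstance)
    (s t : ℝ≥0) (hst : s ≤ t)
    (y : Ω × ℝ≥0 → ℝ) (hy : Measurable[(F t).prod inferInstance] y)
    (hint : Integrable (fun ω => y (ω, τ ω)) μs)
    (hintu : ∀ u, Integrable (fun ω => y (ω, u)) μ) :
    ∃ g : Ω × ℝ≥0 → ℝ, Measurable[(F s).prod inferInstance] g ∧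
      (∀ u, (fun ω => g (ω, u)) =ᵐ[μs] μs[fun ω => y (ω, u) | F s] ∧
            (fun ω => g (ω, u)) =ᵐ[μ] μ[fun ω => y (ω, u) | F s]) ∧
      (μs[fun ω => y (ω, τ ω) | 𝒢τ s]) =ᵐ[μs] fun ω => g (ω, τ ω) := by
  have hmt : F t ≤ mΩ := F.le t
  have hst' : F s ≤ F t := F.mono hst
  have htrim : μ.trim hmt = μs.trim hmt := by
    refine @Measure.ext Ω (F t) _ _ fun A hA ↦ ?_
    rw [trim_measurableSet_eq hmt hA, trim_measurableSet_eq hmt hA, hagreeF t A hA]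
  have hslice (u : ℝ≥0) : StronglyMeasurable[F t] fun ω ↦ y (ω, u) :=
    (hy.comp measurable_prodMk_right).stronglyMeasurable
  obtain ⟨g, hg_meas, hg⟩ := exists_measurable_forall_ae_eq_condExp (μ := μs.trim hmt) hst' hy
    fun u ↦ htrim ▸ (hintu u).trim hmt (hslice u)
  refine ⟨g, hg_meas, fun u ↦ ⟨?_, ?_⟩, ?_⟩
  · exact (ae_eq_of_ae_eq_trim (hg u)).trans (condExp_trim_ae_eq hst' hmt (hslice u))
  · exact (ae_eq_of_ae_eq_trim (htrim ▸ hg u)).trans (condExp_trim_ae_eq hst' hmt (hslice u))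
  · have hindepFun := (IndepFun_iff_Indep (mβ := F t) id τ μs).2 <| by
      rw [MeasurableSpace.comap_id]
      exact (hindep t).symm
    have hcond := condExp_comap_sup_comap_ae_eq_of_indepFun (mα := F t) hst'
      (measurable_id'' hmt) hτ hindepFun hy hint hg_meas (by rw [← trim_eq_map hmt]; exact hg)
    rwa [MeasurableSpace.comap_id, ← h𝒢τ] at hcond

/-- Under `P*` (τ independent of `F`, `P* = P` on each `F_t` and on `σ(τ)`),
for `s ≤ t` and `y_t(τ)` a `P*`-integrable `G^τ_t`-measurable random variable,
`E*(y_t(τ) | G^τ_s) = E*(y_t(u)|F_s)|_{u=τ} = E(y_t(u)|F_s)|_{u=τ}` a.s. -/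
theorem stmt4 {Ω : Type*} {mΩ : MeasurableSpace Ω} (μ μs : Measure Ω)
    [IsProbabilityMeasure μ] [IsProbabilityMeasure μs]
    (F : Filtration ℝ≥0 mΩ) (τ : Ω → ℝ≥0) (hτ : Measurable τ)
    (hindep : ∀ t, ProbabilityTheory.Indep
      (MeasurableSpace.comap τ inferInstance) (F t) μs)
    (hagreeF : ∀ t, ∀ s : Set Ω, MeasurableSet[F t] s → μs s = μ s)
    (hagreeτ : ∀ B : Set ℝ≥0, MeasurableSet B → μs (τ ⁻¹' B) = μ (τ ⁻¹' B))
    (𝒢τ : Filtration ℝ≥0 mΩ)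
    (h𝒢τ : ∀ r, 𝒢τ r = F r ⊔ MeasurableSpace.comap τ inferInstance)
    (s t : ℝ≥0) (hst : s ≤ t)
    (y : Ω × ℝ≥0 → ℝ) (hy : Measurable[(F t).prod inferInstance] y)
    (hint : Integrable (fun ω => y (ω, τ ω)) μs)
    (hintu : ∀ u, Integrable (fun ω => y (ω, u)) μ) :
    ∃ g : Ω × ℝ≥0 → ℝ, Measurable[(F s).prod inferInstance] g ∧
      (∀ u, (fun ω => g (ω, u)) =ᵐ[μs] μs[fun ω => y (ω, u) | F s] ∧
            (fun ω => g (ω, u)) =ᵐ[μ] μ[fun ω => y (ω, u) | F s]) ∧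
      (μs[fun ω => y (ω, τ ω) | 𝒢τ s]) =ᵐ[μs] fun ω => g (ω, τ ω) :=
  stmt4_general μ μs F τ hτ hindep hagreeF 𝒢τ h𝒢τ s t hst y hy hint hintu
end

section
/- Projecting the martingale L_t = 1/p_t(τ) onto the progressively enlarged filtration G gives the Radon–Nikodým density of P* with respect to P on G_t: ℓ_t := E(L_t | G_t) = 1_{t < τ} G*(t)/G_t + 1_{τ ≤ t} / p_t(τ), where G*(t) = P(τ > t). -/
/-!
Every `𝒢_t`-measurable set agrees on `{t < τ}` with an `F_t`-measurable set `B`, and on `{τ ≤ t}`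
the claimed density is `L_t` itself, so it suffices to compare the integrals of `L_t` and of
`G*(t) / G_t` over `B ∩ {t < τ}`. The hypothesis on `p` says that on `{t < τ}` the joint law of
`(ω, τ)`, with `ω` seen through `F_t`, is `p_t(u) ν(du) P(dω)`. Against this kernel both
`1 / p_t(u)` and `G*(t) / G_t` integrate over `u > t` to `ν (t, ∞) = G*(t)`.
-/

open MeasureTheory Filter Set
open scoped NNReal ENNReal

theorem MeasureTheory.Measure.ext_prod_Ioi {α β : Type*} {mα : MeasurableSpace α}
    [TopologicalSpace β] [LinearOrder β] [OrderTopology β] [SecondCountableTopology β]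
    [MeasurableSpace β] [BorelSpace β] {κ₁ κ₂ : Measure (α × β)} [IsFiniteMeasure κ₁]
    (h : ∀ ⦃s : Set α⦄, MeasurableSet s → ∀ S ∈ insert univ (range Ioi),
      κ₁ (s ×ˢ S) = κ₂ (s ×ˢ S)) :
    κ₁ = κ₂ := by
  have hgen : MeasurableSpace.generateFrom (insert univ (range Ioi)) = ‹MeasurableSpace β› := by
    rw [BorelSpace.measurable_eq (α := β), borel_eq_generateFrom_Ioi,
      MeasurableSpace.generateFrom_insert_univ]
  have hspan : IsCountablySpanning (insert (univ : Set β) (range Ioi)) :=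
    ⟨fun _ => univ, fun _ => mem_insert _ _, iUnion_const _⟩
  refine ext_of_generate_finite _ (generateFrom_eq_prod MeasurableSpace.generateFrom_measurableSet
      hgen isCountablySpanning_measurableSet hspan).symm
    (MeasurableSpace.isPiSystem_measurableSet.prod isPiSystem_Ioi.insert_univ) ?_ ?_
  · rintro _ ⟨s, hs, S, hS, rfl⟩
    exact h hs S hS
  · rw [← univ_prod_univ]
    exact h .univ _ (mem_insert _ _)

theorem setLIntegral_prod_trim {Ω β : Type*} {m mΩ : MeasurableSpace Ω} [MeasurableSpace β]
    (hm : m ≤ mΩ) {μ : Measure Ω} [SigmaFinite (μ.trim hm)] {ν : Measure β} [SFinite ν]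
    {f : Ω × β → ℝ≥0∞} (hf : Measurable[m.prod inferInstance] f)
    {s : Set Ω} (hs : MeasurableSet[m] s) (S : Set β) :
    ∫⁻ x in s ×ˢ S, f x ∂(@Measure.prod Ω β m _ (μ.trim hm) ν)
      = ∫⁻ ω in s, ∫⁻ u in S, f (ω, u) ∂ν ∂μ := by
  rw [@setLIntegral_prod Ω β m _ (μ.trim hm) ν _ _ s S f hf.aemeasurable, restrict_trim hm μ hs,
    lintegral_trim hm (@Measurable.lintegral_prod_right' Ω β m _ (ν.restrict S) _ f hf)]

theorem setLIntegral_comp_prodMk_eq_of_density {Ω β : Type*} {m mΩ : MeasurableSpace Ω}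
    [TopologicalSpace β] [LinearOrder β] [OrderTopology β] [SecondCountableTopology β]
    [MeasurableSpace β] [BorelSpace β]
    (hm : m ≤ mΩ) {μ : Measure Ω} [IsFiniteMeasure μ] {ν : Measure β} [SFinite ν]
    {τ : Ω → β} (hτ : Measurable τ) {ρ : Ω × β → ℝ≥0∞} (hρ : Measurable[m.prod inferInstance] ρ)
    {t : β} (hdens : ∀ s, MeasurableSet[m] s → ∀ θ, t ≤ θ →
      μ (s ∩ {ω | θ < τ ω}) = ∫⁻ ω in s, ∫⁻ u in Ioi θ, ρ (ω, u) ∂ν ∂μ)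
    {f : Ω × β → ℝ≥0∞} (hf : Measurable[m.prod inferInstance] f)
    {s : Set Ω} (hs : MeasurableSet[m] s) :
    ∫⁻ ω in s ∩ {ω | t < τ ω}, f (ω, τ ω) ∂μ
      = ∫⁻ ω in s, ∫⁻ u in Ioi t, f (ω, u) * ρ (ω, u) ∂ν ∂μ := by
  have : IsFiniteMeasure (μ.trim hm) := isFiniteMeasure_trim hm
  have hπ : Measurable[mΩ, m.prod inferInstance] fun ω => (ω, τ ω) :=
    (measurable_id'' hm).prodMk hτ
  have hst : MeasurableSet[m.prod inferInstance] (s ×ˢ Ioi t) := hs.prod measurableSet_Ioi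
  have hκ : (@Measure.map Ω (Ω × β) mΩ (m.prod _) (fun ω => (ω, τ ω)) μ).restrict (s ×ˢ Ioi t)
      = ((@Measure.prod Ω β m _ (μ.trim hm) ν).withDensity ρ).restrict (s ×ˢ Ioi t) := by
    refine Measure.ext_prod_Ioi fun B hB S hS => ?_
    obtain ⟨θ, hθ, hSt⟩ : ∃ θ, t ≤ θ ∧ S ∩ Ioi t = Ioi θ := by
      rcases hS with rfl | ⟨θ, rfl⟩
      exacts [⟨t, le_rfl, univ_inter _⟩, ⟨θ ⊔ t, le_sup_right, Ioi_inter_Ioi⟩]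
    have hBs : MeasurableSet[m.prod inferInstance] ((B ∩ s) ×ˢ Ioi θ) :=
      (hB.inter hs).prod measurableSet_Ioi
    rw [Measure.restrict_apply' hst, Measure.restrict_apply' hst, prod_inter_prod, hSt,
      Measure.map_apply hπ hBs, withDensity_apply _ hBs, setLIntegral_prod_trim hm hρ (hB.inter hs)]
    exact hdens _ (hB.inter hs) θ hθ
  calc ∫⁻ ω in s ∩ {ω | t < τ ω}, f (ω, τ ω) ∂μ
      = ∫⁻ x in s ×ˢ Ioi t, f x ∂(@Measure.map Ω (Ω × β) mΩ (m.prod _) (fun ω => (ω, τ ω)) μ) :=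
        (@setLIntegral_map Ω (Ω × β) mΩ (m.prod _) μ _ _ _ hst hf hπ).symm
    _ = ∫⁻ x in s ×ˢ Ioi t, f x ∂(@Measure.prod Ω β m _ (μ.trim hm) ν).withDensity ρ := by
        rw [hκ]
    _ = ∫⁻ ω in s, ∫⁻ u in Ioi t, f (ω, u) * ρ (ω, u) ∂ν ∂μ := by
        rw [restrict_withDensity hst, lintegral_withDensity_eq_lintegral_mul _ hρ hf,
          setLIntegral_prod_trim hm (hρ.mul hf) hs]
        simp_rw [Pi.mul_apply, mul_comm]

abbrev progressiveEnlargement {Ω ι : Type*} [LinearOrder ι] (m : MeasurableSpace Ω) (τ : Ω → ι)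
    (t : ι) : MeasurableSpace Ω :=
  m ⊔ ⨆ v ∈ Iic t, MeasurableSpace.comap (fun ω => if τ ω ≤ v then (1 : ℝ) else 0) inferInstance

section ProgressiveEnlargement

variable {Ω ι : Type*} [LinearOrder ι] {m : MeasurableSpace Ω} {τ : Ω → ι} {t : ι}

theorem le_progressiveEnlargement : m ≤ progressiveEnlargement m τ t := le_sup_left

theorem measurableSet_progressiveEnlargement_le {v : ι} (hv : v ≤ t) :
    MeasurableSet[progressiveEnlargement m τ t] {ω | τ ω ≤ v} := by
  have hcomap : MeasurableSpace.comap (fun ω => if τ ω ≤ v then (1 : ℝ) else 0) inferInstance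
      ≤ progressiveEnlargement m τ t :=
    le_sup_of_le_right (le_iSup₂_of_le v hv le_rfl)
  have hpre : {ω | τ ω ≤ v} = (fun ω => if τ ω ≤ v then (1 : ℝ) else 0) ⁻¹' {1} := by
    ext ω
    by_cases h : τ ω ≤ v <;> simp [h]
  rw [hpre]
  exact hcomap _ ⟨{1}, measurableSet_singleton 1, rfl⟩

theorem measurableSet_progressiveEnlargement_lt :
    MeasurableSet[progressiveEnlargement m τ t] {ω | t < τ ω} := by
  simpa only [compl_ofPred, not_le] using (measurableSet_progressiveEnlargement_le le_rfl).compl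

theorem measurable_min_progressiveEnlargement [TopologicalSpace ι] [OrderTopology ι]
    [SecondCountableTopology ι] [MeasurableSpace ι] [BorelSpace ι] :
    Measurable[progressiveEnlargement m τ t] fun ω => min (τ ω) t := by
  let := progressiveEnlargement m τ t
  refine measurable_of_Iic fun v => ?_
  by_cases hv : t ≤ v
  · have : (fun ω => min (τ ω) t) ⁻¹' Iic v = univ := by ext ω; simp [hv]
    rw [this]
    exact MeasurableSet.univ
  · have : (fun ω => min (τ ω) t) ⁻¹' Iic v = {ω | τ ω ≤ v} := by ext ω; simp [hv]
    rw [this]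
    exact measurableSet_progressiveEnlargement_le (not_le.mp hv).le

theorem exists_inter_eq_of_measurableSet_progressiveEnlargement {s : Set Ω}
    (hs : MeasurableSet[progressiveEnlargement m τ t] s) :
    ∃ B, MeasurableSet[m] B ∧ s ∩ {ω | t < τ ω} = B ∩ {ω | t < τ ω} := by
  set A := {ω | t < τ ω}
  have htrace : (progressiveEnlargement m τ t).comap ((↑) : A → Ω) = m.comap (↑) := by
    simp only [progressiveEnlargement, MeasurableSpace.comap_sup, MeasurableSpace.comap_iSup,
      MeasurableSpace.comap_comp]
    refine sup_eq_left.2 (iSup₂_le fun v hv => ?_)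
    have hconst : (fun ω => if τ ω ≤ v then (1 : ℝ) else 0) ∘ ((↑) : A → Ω) = fun _ => 0 :=
      funext fun ω => if_neg (not_le.mpr (lt_of_le_of_lt hv ω.2))
    rw [hconst, MeasurableSpace.comap_const]
    exact bot_le
  obtain ⟨B, hB, hBs⟩ : MeasurableSet[m.comap (↑)] ((↑) ⁻¹' s : Set A) :=
    htrace ▸ ⟨s, hs, rfl⟩
  refine ⟨B, hB, ?_⟩
  rw [inter_comm, inter_comm B, ← Subtype.preimage_coe_eq_preimage_coe_iff, hBs]

theorem measurable_ite_lt_progressiveEnlargement [TopologicalSpace ι] [OrderTopology ι]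
    [SecondCountableTopology ι] [MeasurableSpace ι] [BorelSpace ι] {γ : Type*} [MeasurableSpace γ]
    {h : Ω → γ} (hh : Measurable[m] h) {f : Ω × ι → γ} (hf : Measurable[m.prod inferInstance] f) :
    Measurable[progressiveEnlargement m τ t] fun ω => if t < τ ω then h ω else f (ω, τ ω) := by
  have hπ : Measurable[progressiveEnlargement m τ t, m.prod inferInstance]
      fun ω => (ω, min (τ ω) t) :=
    (measurable_id'' le_progressiveEnlargement).prodMk measurable_min_progressiveEnlargement
  have hmin : (fun ω => if t < τ ω then h ω else f (ω, τ ω))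
      = fun ω => if t < τ ω then h ω else f (ω, min (τ ω) t) := by
    funext ω
    split_ifs with hω
    · rfl
    · rw [min_eq_left (not_lt.mp hω)]
  rw [hmin]
  exact Measurable.ite measurableSet_progressiveEnlargement_lt
    (hh.mono le_progressiveEnlargement le_rfl) (hf.comp hπ)

end ProgressiveEnlargement

section ConditionalExpectation

variable {Ω : Type*} {m mΩ : MeasurableSpace Ω} {μ : Measure Ω}

theorem ae_eq_condExp_of_forall_setLIntegral_eq (hm : m ≤ mΩ) [SigmaFinite (μ.trim hm)]
    {f g : Ω → ℝ} (hf : Integrable f μ) (hf₀ : 0 ≤ᵐ[μ] f) (hg₀ : 0 ≤ᵐ[μ] g)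
    (hgm : Measurable[m] g)
    (h : ∀ s, MeasurableSet[m] s →
      ∫⁻ ω in s, ENNReal.ofReal (g ω) ∂μ = ∫⁻ ω in s, ENNReal.ofReal (f ω) ∂μ) :
    g =ᵐ[μ] μ[f | m] := by
  have hgm' : AEStronglyMeasurable g μ := (hgm.mono hm le_rfl).aestronglyMeasurable
  have hg : Integrable g μ := by
    refine ⟨hgm', ?_⟩
    rw [hasFiniteIntegral_iff_ofReal hg₀, ← setLIntegral_univ, h univ .univ, setLIntegral_univ]
    exact (hasFiniteIntegral_iff_ofReal hf₀).1 hf.2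
  refine ae_eq_condExp_of_forall_setIntegral_eq hm hf (fun s _ _ => hg.integrableOn)
    (fun s hs _ => ?_) hgm.stronglyMeasurable.aestronglyMeasurable
  rw [integral_eq_lintegral_of_nonneg_ae (ae_restrict_of_ae hg₀) hgm'.restrict,
    integral_eq_lintegral_of_nonneg_ae (ae_restrict_of_ae hf₀) hf.1.restrict, h s hs]

theorem measureReal_inter_eq_setIntegral_of_condExp_indicator (hm : m ≤ mΩ) [IsFiniteMeasure μ]
    {S : Set Ω} (hS : MeasurableSet S) {φ : Ω → ℝ} (hφ : μ[S.indicator 1 | m] =ᵐ[μ] φ)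
    {B : Set Ω} (hB : MeasurableSet[m] B) :
    μ.real (S ∩ B) = ∫ ω in B, φ ω ∂μ := by
  have : IsFiniteMeasure (μ.trim hm) := isFiniteMeasure_trim hm
  rw [← setIntegral_congr_ae (hm B hB) (hφ.mono fun ω h _ => h),
    setIntegral_condExp hm ((integrable_const 1).indicator hS) hB, integral_indicator_one hS,
    measureReal_restrict_apply hS]

end ConditionalExpectation

open Classical in
/-- Where `q · ω` is not integrable on `(t, ∞)`, the Bochner integrals `∫ u in Ioi θ, q u ω ∂ν`
are junk (`0`); there `P(t < τ | m)` vanishes, so cutting `q` off changes nothing on `{t < τ}`. -/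
noncomputable def cutoffDensity {Ω : Type*} (ν : Measure ℝ≥0) (q : ℝ≥0 → Ω → ℝ) (t : ℝ≥0)
    (x : Ω × ℝ≥0) : ℝ≥0∞ :=
  if IntegrableOn (fun u => q u x.1) (Ioi t) ν then ENNReal.ofReal (q x.2 x.1) else 0

section ConditionalDensity

variable {Ω : Type*} {m mΩ : MeasurableSpace Ω} {μ : Measure Ω} {ν : Measure ℝ≥0}
  {τ : Ω → ℝ≥0} {q : ℝ≥0 → Ω → ℝ} {t : ℝ≥0}

theorem measurableSet_integrableOn_Ioi [SFinite ν]
    (hq : Measurable[m.prod inferInstance] fun x : Ω × ℝ≥0 => q x.2 x.1) (t : ℝ≥0) :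
    MeasurableSet[m] {ω | IntegrableOn (fun u => q u ω) (Ioi t) ν} := by
  let := m
  exact measurableSet_integrable (f := fun ω u => q u ω) hq.stronglyMeasurable

theorem measurable_setIntegral_Ioi [SFinite ν]
    (hq : Measurable[m.prod inferInstance] fun x : Ω × ℝ≥0 => q x.2 x.1) (θ : ℝ≥0) :
    Measurable[m] fun ω => ∫ u in Ioi θ, q u ω ∂ν := by
  let := m
  exact hq.stronglyMeasurable.integral_prod_right'.measurable

theorem measurable_cutoffDensity [SFinite ν]
    (hq : Measurable[m.prod inferInstance] fun x : Ω × ℝ≥0 => q x.2 x.1) (t : ℝ≥0) :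
    Measurable[m.prod inferInstance] (cutoffDensity ν q t) := by
  let := m
  exact Measurable.ite (measurable_fst (measurableSet_integrableOn_Ioi (ν := ν) hq t))
    (ENNReal.measurable_ofReal.comp hq) measurable_const

theorem measure_lt_inter_not_integrableOn_eq_zero (hm : m ≤ mΩ) [IsFiniteMeasure μ] [SFinite ν]
    (hτ : Measurable τ) (hq : Measurable[m.prod inferInstance] fun x : Ω × ℝ≥0 => q x.2 x.1)
    (hdens : ∀ θ, μ[{ω | θ < τ ω}.indicator 1 | m] =ᵐ[μ] fun ω => ∫ u in Ioi θ, q u ω ∂ν) :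
    μ ({ω | t < τ ω} ∩ {ω | ¬IntegrableOn (fun u => q u ω) (Ioi t) ν}) = 0 := by
  have hD := (measurableSet_integrableOn_Ioi (ν := ν) hq t).compl
  have h := measureReal_inter_eq_setIntegral_of_condExp_indicator hm (hτ measurableSet_Ioi)
    (hdens t) hD
  rw [setIntegral_congr_fun (hm _ hD) fun ω hω => integral_undef hω, integral_zero] at h
  exact (measureReal_eq_zero_iff).1 h

theorem measure_inter_lt_eq_setLIntegral_cutoffDensity (hm : m ≤ mΩ) [IsFiniteMeasure μ]
    [SFinite ν] (hτ : Measurable τ)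
    (hq : Measurable[m.prod inferInstance] fun x : Ω × ℝ≥0 => q x.2 x.1)
    (hq₀ : ∀ u ω, 0 ≤ q u ω)
    (hdens : ∀ θ, μ[{ω | θ < τ ω}.indicator 1 | m] =ᵐ[μ] fun ω => ∫ u in Ioi θ, q u ω ∂ν)
    (B : Set Ω) (hB : MeasurableSet[m] B) (θ : ℝ≥0) (hθ : t ≤ θ) :
    μ (B ∩ {ω | θ < τ ω}) = ∫⁻ ω in B, ∫⁻ u in Ioi θ, cutoffDensity ν q t (ω, u) ∂ν ∂μ := by
  set D := {ω | IntegrableOn (fun u => q u ω) (Ioi t) ν}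
  have hD : MeasurableSet[m] D := measurableSet_integrableOn_Ioi hq t
  have hθτ : MeasurableSet {ω | θ < τ ω} := hτ measurableSet_Ioi
  have hnull : μ ((B ∩ {ω | θ < τ ω}) \ D) = 0 := by
    refine measure_mono_null ?_
      (measure_lt_inter_not_integrableOn_eq_zero (t := t) hm hτ hq hdens)
    exact fun ω hω => ⟨hθ.trans_lt hω.1.2, hω.2⟩
  have hGθ : Integrable (fun ω => ∫ u in Ioi θ, q u ω ∂ν) μ :=
    integrable_condExp.congr (hdens θ)
  calc μ (B ∩ {ω | θ < τ ω})
      = μ ({ω | θ < τ ω} ∩ (B ∩ D)) := by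
        rw [← measure_inter_add_sdiff _ (hm _ hD), hnull, add_zero, inter_right_comm, inter_comm]
    _ = ENNReal.ofReal (∫ ω in B ∩ D, ∫ u in Ioi θ, q u ω ∂ν ∂μ) := by
        rw [← measureReal_inter_eq_setIntegral_of_condExp_indicator hm hθτ (hdens θ)
          (hB.inter hD), ofReal_measureReal]
    _ = ∫⁻ ω in B ∩ D, ENNReal.ofReal (∫ u in Ioi θ, q u ω ∂ν) ∂μ :=
        ofReal_integral_eq_lintegral_ofReal hGθ.integrableOn
          (ae_of_all _ fun ω => integral_nonneg fun u => hq₀ u ω)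
    _ = ∫⁻ ω in B ∩ D, ∫⁻ u in Ioi θ, ENNReal.ofReal (q u ω) ∂ν ∂μ :=
        setLIntegral_congr_fun (hm _ (hB.inter hD)) fun ω hω =>
          ofReal_integral_eq_lintegral_ofReal (hω.2.mono_set (Ioi_subset_Ioi hθ))
            (ae_of_all _ fun u => hq₀ u ω)
    _ = ∫⁻ ω in B, ∫⁻ u in Ioi θ, cutoffDensity ν q t (ω, u) ∂ν ∂μ := by
        rw [inter_comm, ← setLIntegral_indicator (hm _ hD)]
        congr 1 with ω
        by_cases hω : IntegrableOn (fun u => q u ω) (Ioi t) ν <;> simp [cutoffDensity, D, hω]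

theorem lintegral_Ioi_ratio_mul_cutoffDensity [IsFiniteMeasure ν] (hq₀ : ∀ u ω, 0 < q u ω)
    (ω : Ω) :
    ∫⁻ u in Ioi t, ENNReal.ofReal ((ν (Ioi t)).toReal / ∫ v in Ioi t, q v ω ∂ν)
        * cutoffDensity ν q t (ω, u) ∂ν
      = ∫⁻ u in Ioi t, ENNReal.ofReal (q u ω)⁻¹ * cutoffDensity ν q t (ω, u) ∂ν := by
  by_cases hω : IntegrableOn (fun u => q u ω) (Ioi t) ν
  swap
  · simp [cutoffDensity, hω]
  by_cases hνt : ν (Ioi t) = 0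
  · simp [Measure.restrict_eq_zero.2 hνt]
  have hG : 0 < ∫ v in Ioi t, q v ω ∂ν := by
    rw [setIntegral_pos_iff_support_of_nonneg_ae (ae_of_all _ fun u => (hq₀ u ω).le) hω]
    simpa [Function.support, (hq₀ _ ω).ne'] using pos_iff_ne_zero.2 hνt
  have hinv : ∀ u, ENNReal.ofReal (q u ω)⁻¹ * ENNReal.ofReal (q u ω) = 1 := fun u => by
    rw [← ENNReal.ofReal_mul (inv_nonneg.2 (hq₀ u ω).le), inv_mul_cancel₀ (hq₀ u ω).ne',
      ENNReal.ofReal_one]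
  simp only [cutoffDensity, hω, if_true, hinv, setLIntegral_one]
  rw [lintegral_const_mul' _ _ ENNReal.ofReal_ne_top,
    ← ofReal_integral_eq_lintegral_ofReal hω (ae_of_all _ fun u => (hq₀ u ω).le),
    ← ENNReal.ofReal_mul (div_nonneg ENNReal.toReal_nonneg hG.le), div_mul_cancel₀ _ hG.ne',
    ENNReal.ofReal_toReal (measure_ne_top _ _)]

theorem setLIntegral_ratio_eq_setLIntegral_inv (hm : m ≤ mΩ) [IsFiniteMeasure μ]
    [IsFiniteMeasure ν] (hτ : Measurable τ)
    (hq : Measurable[m.prod inferInstance] fun x : Ω × ℝ≥0 => q x.2 x.1)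
    (hq₀ : ∀ u ω, 0 < q u ω)
    (hdens : ∀ θ, μ[{ω | θ < τ ω}.indicator 1 | m] =ᵐ[μ] fun ω => ∫ u in Ioi θ, q u ω ∂ν)
    {B : Set Ω} (hB : MeasurableSet[m] B) :
    ∫⁻ ω in B ∩ {ω | t < τ ω}, ENNReal.ofReal ((ν (Ioi t)).toReal / ∫ u in Ioi t, q u ω ∂ν) ∂μ
      = ∫⁻ ω in B ∩ {ω | t < τ ω}, ENNReal.ofReal (q (τ ω) ω)⁻¹ ∂μ := by
  have hρ := measure_inter_lt_eq_setLIntegral_cutoffDensity (t := t) hm hτ hq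
    (fun u ω => (hq₀ u ω).le) hdens
  have hratio := setLIntegral_comp_prodMk_eq_of_density hm hτ (measurable_cutoffDensity hq t) hρ
    (f := fun x => ENNReal.ofReal ((ν (Ioi t)).toReal / ∫ u in Ioi t, q u x.1 ∂ν))
    (ENNReal.measurable_ofReal.comp ((measurable_const.div (measurable_setIntegral_Ioi hq t)).comp
      (@measurable_fst Ω ℝ≥0 m _))) hB
  have hinv := setLIntegral_comp_prodMk_eq_of_density hm hτ (measurable_cutoffDensity hq t) hρ
    (f := fun x => ENNReal.ofReal (q x.2 x.1)⁻¹) (ENNReal.measurable_ofReal.comp hq.inv) hB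
  dsimp only at hratio hinv
  rw [hratio, hinv]
  exact lintegral_congr fun ω => lintegral_Ioi_ratio_mul_cutoffDensity hq₀ ω

end ConditionalDensity

theorem stmt7_general {Ω : Type*} {mΩ : MeasurableSpace Ω} (μ : Measure Ω) [IsProbabilityMeasure μ]
    (F : Filtration ℝ≥0 mΩ) (τ : Ω → ℝ≥0) (hτ : Measurable τ)
    (ν : Measure ℝ≥0) (hν : ν = μ.map τ)
    (p : ℝ≥0 → ℝ≥0 → Ω → ℝ)
    (hpmeas : ∀ t, Measurable[(F t).prod inferInstance] fun q : Ω × ℝ≥0 => p t q.2 q.1)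
    (hppos : ∀ t u ω, 0 < p t u ω)
    (hdens : ∀ t θ : ℝ≥0,
      (μ[fun ω => if θ < τ ω then (1 : ℝ) else 0 | F t]) =ᵐ[μ]
        fun ω => ∫ u in Set.Ioi θ, p t u ω ∂ν)
    (𝒢 : Filtration ℝ≥0 mΩ)
    (h𝒢 : ∀ r, 𝒢 r = F r ⊔ ⨆ v ∈ Set.Iic r,
      MeasurableSpace.comap (fun ω => if τ ω ≤ v then (1 : ℝ) else 0) inferInstance)
    (t : ℝ≥0)
    (hLint : Integrable (fun ω => (p t (τ ω) ω)⁻¹) μ) :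
    (μ[fun ω => (p t (τ ω) ω)⁻¹ | 𝒢 t]) =ᵐ[μ]
      fun ω => if t < τ ω then (ν (Set.Ioi t)).toReal / (∫ u in Set.Ioi t, p t u ω ∂ν)
               else (p t (τ ω) ω)⁻¹ := by
  have : IsProbabilityMeasure ν := hν ▸ Measure.isProbabilityMeasure_map hτ.aemeasurable
  have h𝒢t : 𝒢 t = progressiveEnlargement (F t) τ t := h𝒢 t
  -- `Set.indicator` unfolds to the `if` of `hdens`
  have hdens' : ∀ θ, μ[{ω | θ < τ ω}.indicator 1 | F t] =ᵐ[μ]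
      fun ω => ∫ u in Ioi θ, p t u ω ∂ν := fun θ => hdens t θ
  have hA : MeasurableSet {ω | t < τ ω} := hτ measurableSet_Ioi
  refine (ae_eq_condExp_of_forall_setLIntegral_eq (𝒢.le t) hLint
    (ae_of_all _ fun ω => inv_nonneg.2 (hppos t _ ω).le) (ae_of_all _ fun ω => ?_) ?_
    fun s hs => ?_).symm
  · split_ifs
    exacts [div_nonneg ENNReal.toReal_nonneg (integral_nonneg fun u => (hppos t u ω).le),
      inv_nonneg.2 (hppos t _ ω).le]
  · rw [h𝒢t]
    exact measurable_ite_lt_progressiveEnlargement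
      (measurable_const.div (measurable_setIntegral_Ioi (hpmeas t) t)) (hpmeas t).inv
  · obtain ⟨B, hB, hsB⟩ := exists_inter_eq_of_measurableSet_progressiveEnlargement (h𝒢t ▸ hs)
    rw [← lintegral_inter_add_sdiff _ s hA, ← lintegral_inter_add_sdiff _ s hA, hsB]
    congr 1
    · rw [setLIntegral_congr_fun (F.le t B hB |>.inter hA) fun ω hω => by
        rw [if_pos (show t < τ ω from hω.2)]]
      exact setLIntegral_ratio_eq_setLIntegral_inv (F.le t) hτ (hpmeas t) (hppos t) hdens' hB
    · exact setLIntegral_congr_fun (𝒢.le t s hs |>.diff hA) fun ω hω => by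
        rw [if_neg (show ¬t < τ ω from hω.2)]

/-- Projecting `L_t = 1/p_t(τ)` on the progressively enlarged filtration `G`
gives `ℓ_t = E(L_t | G_t) = 1_{t<τ} G*(t)/G_t + 1_{τ≤t}/p_t(τ)`, where `G*(t) = P(τ > t)`
and `G_t = ∫_t^∞ p_t(u) ν(du)`. -/
theorem stmt7 {Ω : Type*} {mΩ : MeasurableSpace Ω} (μ : Measure Ω) [IsProbabilityMeasure μ]
    (F : Filtration ℝ≥0 mΩ) (τ : Ω → ℝ≥0) (hτ : Measurable τ)
    (ν : Measure ℝ≥0) (hν : ν = μ.map τ)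
    (p : ℝ≥0 → ℝ≥0 → Ω → ℝ)
    (hpmeas : ∀ t, Measurable[(F t).prod inferInstance] fun q : Ω × ℝ≥0 => p t q.2 q.1)
    (hppos : ∀ t u ω, 0 < p t u ω)
    (hpmart : ∀ᵐ u ∂ν, Martingale (fun t ω => p t u ω) F μ)
    (hdens : ∀ t θ : ℝ≥0,
      (μ[fun ω => if θ < τ ω then (1 : ℝ) else 0 | F t]) =ᵐ[μ]
        fun ω => ∫ u in Set.Ioi θ, p t u ω ∂ν)
    (𝒢 : Filtration ℝ≥0 mΩ)
    (h𝒢 : ∀ r, 𝒢 r = F r ⊔ ⨆ v ∈ Set.Iic r,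
      MeasurableSpace.comap (fun ω => if τ ω ≤ v then (1 : ℝ) else 0) inferInstance)
    (t : ℝ≥0)
    (hLint : Integrable (fun ω => (p t (τ ω) ω)⁻¹) μ) :
    (μ[fun ω => (p t (τ ω) ω)⁻¹ | 𝒢 t]) =ᵐ[μ]
      fun ω => if t < τ ω then (ν (Set.Ioi t)).toReal / (∫ u in Set.Ioi t, p t u ω ∂ν)
               else (p t (τ ω) ω)⁻¹ :=
  stmt7_general μ F τ hτ ν hν p hpmeas hppos hdens 𝒢 h𝒢 t hLint
end

section
/- Under P*, the process M*_t := H_t − ∫_0^{t∧τ} λ*(s) ν(ds), with λ*(t) = 1/G*(t) and G*(t) = P(τ > t), is a (P*, G)-martingale; moreover M* is not a (P*, G^τ)-martingale, but is a bounded variation G^τ-predictable process, hence a (P*, G^τ)-semimartingale with null martingale part. In particular H is not immersed in G^τ under P*. -/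
/-!
Write `Λ(x) = ∫_{[0,x]} ν(du) / ν(u,∞)` and `m_t(x) = 1{x ≤ t} − Λ(t ∧ x)`, so that
`M*_t = m_t(τ)`. By Tonelli and `ν[u,∞) = ν(u,∞)` (no atoms), `∫ Λ(t ∧ x) ν(dx) = ν[0,t]`, i.e.
`E*[M*_t] = 0`. An increment `m_t − m_s` vanishes on `[0,s]`, and on `{τ > s}` every
`G_s`-event coincides with an `F_s`-event, which is independent of `τ` under `P*`; hence the
increments are orthogonal to `G_s` and `M*` is a `G`-martingale, and by the tower property an
`H`-martingale. In `G^τ` the whole path `t ↦ m_t(τ)` is known at time `0`, so a martingale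
property would force `M*_t = M*_0 = 0` a.s., whereas `M*_t = −Λ(t) < 0` on the non-null event
`{τ > t}` once `ν[0,t] > 0`. The same path description gives finite variation and
`G^τ`-predictability, and `M*` witnesses that `H` is not immersed in `G^τ`.
-/

open MeasureTheory Filter Set
open scoped NNReal ENNReal

/-- The predictable σ-algebra on `ℝ≥0 × Ω` associated with a filtration `F`. -/
def predSigma {Ω : Type*} {mΩ : MeasurableSpace Ω} (F : Filtration ℝ≥0 mΩ) :
    MeasurableSpace (ℝ≥0 × Ω) :=
  MeasurableSpace.generateFrom
    ({S | ∃ A : Set Ω, MeasurableSet[F 0] A ∧ S = {(0 : ℝ≥0)} ×ˢ A} ∪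
     {S | ∃ (a b : ℝ≥0) (A : Set Ω), MeasurableSet[F a] A ∧ S = Set.Ioc a b ×ˢ A})

open ProbabilityTheory

noncomputable def hazardRate (ν : Measure ℝ≥0) (u : ℝ≥0) : ℝ≥0∞ := (ν (Ioi u))⁻¹

/-- Computed in `ℝ≥0∞`, so that Tonelli applies without integrability side conditions. -/
noncomputable def cumHazard (ν : Measure ℝ≥0) (x : ℝ≥0) : ℝ≥0∞ :=
  ∫⁻ u in Iic x, hazardRate ν u ∂ν

noncomputable def compensatedDefault (ν : Measure ℝ≥0) (t x : ℝ≥0) : ℝ :=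
  (if x ≤ t then 1 else 0) - (cumHazard ν (min t x)).toReal

section Variation

variable {α E : Type*} [LinearOrder α] [SeminormedAddCommGroup E]

theorem eVariationOn_sub_le (f g : α → E) (s : Set α) :
    eVariationOn (f - g) s ≤ eVariationOn f s + eVariationOn g s := by
  refine iSup_le fun ⟨n, u, hu, us⟩ => ?_
  calc ∑ i ∈ Finset.range n, edist ((f - g) (u (i + 1))) ((f - g) (u i))
      ≤ ∑ i ∈ Finset.range n,
          (edist (f (u (i + 1))) (f (u i)) + edist (g (u (i + 1))) (g (u i))) := by
        refine Finset.sum_le_sum fun i _ => ?_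
        simp only [Pi.sub_apply, edist_dist, ← ENNReal.ofReal_add dist_nonneg dist_nonneg]
        exact ENNReal.ofReal_le_ofReal (dist_sub_sub_le _ _ _ _)
    _ = _ := Finset.sum_add_distrib
    _ ≤ _ := add_le_add (eVariationOn.sum_le hu us) (eVariationOn.sum_le hu us)

theorem BoundedVariationOn.sub {f g : α → E} {s : Set α} (hf : BoundedVariationOn f s)
    (hg : BoundedVariationOn g s) : BoundedVariationOn (f - g) s :=
  ((eVariationOn_sub_le f g s).trans_lt (ENNReal.add_lt_top.2 ⟨hf.lt_top, hg.lt_top⟩)).ne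

theorem Monotone.boundedVariationOn_Iic [OrderBot α] {f : α → ℝ}
    (hf : Monotone f) (t : α) : BoundedVariationOn f (Iic t) := by
  simpa only [univ_inter, Icc_bot] using
    (hf.monotoneOn univ).locallyBoundedVariationOn ⊥ t (mem_univ _) (mem_univ _)

end Variation

section Hazard

variable (ν : Measure ℝ≥0)

theorem hazardRate_mono : Monotone (hazardRate ν) :=
  fun _ _ h => ENNReal.inv_le_inv.2 (measure_mono (Ioi_subset_Ioi h))

theorem measurable_hazardRate : Measurable (hazardRate ν) := (hazardRate_mono ν).measurable

theorem cumHazard_mono : Monotone (cumHazard ν) :=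
  fun _ _ h => lintegral_mono_set (Iic_subset_Iic.2 h)

theorem measurable_cumHazard : Measurable (cumHazard ν) := (cumHazard_mono ν).measurable

theorem cumHazard_zero [NullSingletonClass ν] : cumHazard ν 0 = 0 :=
  setLIntegral_measure_zero _ _ <| by
    rw [show Iic (0 : ℝ≥0) = {0} by ext; simp]
    exact measure_singleton 0

theorem measure_Iic_le_cumHazard [IsProbabilityMeasure ν] (t : ℝ≥0) :
    ν (Iic t) ≤ cumHazard ν t := by
  rw [← setLIntegral_one]
  exact setLIntegral_mono (measurable_hazardRate ν) fun u _ => ENNReal.one_le_inv.2 prob_le_one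

variable {ν} (hsupp : ∀ t : ℝ≥0, 0 < ν (Ioi t))
include hsupp

theorem hazardRate_lt_top (u : ℝ≥0) : hazardRate ν u < ∞ := ENNReal.inv_lt_top.2 (hsupp u)

theorem integral_inv_measure_Ioi (x : ℝ≥0) :
    ∫ u in Iic x, ((ν (Ioi u)).toReal)⁻¹ ∂ν = (cumHazard ν x).toReal := by
  simp_rw [← ENNReal.toReal_inv]
  exact integral_toReal (measurable_hazardRate ν).aemeasurable
    (ae_of_all _ (hazardRate_lt_top hsupp))

theorem cumHazard_lt_top [IsFiniteMeasure ν] (x : ℝ≥0) : cumHazard ν x < ∞ :=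
  calc cumHazard ν x ≤ ∫⁻ _ in Iic x, hazardRate ν x ∂ν :=
        setLIntegral_mono measurable_const fun _ hu => hazardRate_mono ν hu
    _ = hazardRate ν x * ν (Iic x) := setLIntegral_const _ _
    _ < ∞ := ENNReal.mul_lt_top (hazardRate_lt_top hsupp x) (measure_lt_top ν _)

theorem hazardRate_mul_measure_Ici [IsFiniteMeasure ν] [NullSingletonClass ν] (u : ℝ≥0) :
    hazardRate ν u * ν (Ici u) = 1 := by
  rw [← measure_congr (Ioi_ae_eq_Ici (μ := ν)), hazardRate,
    ENNReal.inv_mul_cancel (hsupp u).ne' (measure_ne_top ν _)]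

theorem lintegral_cumHazard_min [IsFiniteMeasure ν] [NullSingletonClass ν] (t : ℝ≥0) :
    ∫⁻ x, cumHazard ν (min t x) ∂ν = ν (Iic t) := by
  have hmeas :
      Measurable (Function.uncurry fun (x u : ℝ≥0) => (Iic x).indicator (hazardRate ν) u) :=
    Measurable.ite (measurableSet_le measurable_snd measurable_fst)
      ((measurable_hazardRate ν).comp measurable_snd) measurable_const
  calc ∫⁻ x, cumHazard ν (min t x) ∂ν
      = ∫⁻ x, ∫⁻ u in Iic t, (Iic x).indicator (hazardRate ν) u ∂ν ∂ν := by
        simp_rw [cumHazard, setLIntegral_indicator measurableSet_Iic, Iic_inter_Iic, min_comm]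
    _ = ∫⁻ u in Iic t, ∫⁻ x, (Iic x).indicator (hazardRate ν) u ∂ν ∂ν :=
        lintegral_lintegral_swap hmeas.aemeasurable
    _ = ∫⁻ u in Iic t, hazardRate ν u * ν (Ici u) ∂ν := by
        refine setLIntegral_congr_fun measurableSet_Iic fun u _ => ?_
        rw [← lintegral_indicator_const measurableSet_Ici]
        rfl
    _ = ν (Iic t) := by
        rw [setLIntegral_congr_fun measurableSet_Iic fun u _ => hazardRate_mul_measure_Ici hsupp u,
          setLIntegral_one]

end Hazard

section CompensatedDefault

variable {ν : Measure ℝ≥0}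

theorem compensatedDefault_of_le {t x : ℝ≥0} (hx : x ≤ t) :
    compensatedDefault ν t x = 1 - (cumHazard ν x).toReal := by
  rw [compensatedDefault, if_pos hx, min_eq_right hx]

theorem compensatedDefault_of_lt {t x : ℝ≥0} (hx : t < x) :
    compensatedDefault ν t x = -(cumHazard ν t).toReal := by
  rw [compensatedDefault, if_neg hx.not_ge, min_eq_left hx.le, zero_sub]

theorem compensatedDefault_eq_of_le_of_le {s t x : ℝ≥0} (hxs : x ≤ s) (hst : s ≤ t) :
    compensatedDefault ν t x = compensatedDefault ν s x := by
  rw [compensatedDefault_of_le hxs, compensatedDefault_of_le (hxs.trans hst)]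

variable (ν) in
theorem measurable_compensatedDefault :
    Measurable fun p : ℝ≥0 × ℝ≥0 => compensatedDefault ν p.1 p.2 :=
  (Measurable.ite (measurableSet_le measurable_snd measurable_fst) measurable_const
    measurable_const).sub
    ((measurable_cumHazard ν).comp (measurable_fst.min measurable_snd)).ennreal_toReal

variable (ν) in
theorem measurable_compensatedDefault_apply (t : ℝ≥0) : Measurable (compensatedDefault ν t) :=
  (measurable_compensatedDefault ν).comp (measurable_const.prodMk measurable_id)

variable (hsupp : ∀ t : ℝ≥0, 0 < ν (Ioi t))
include hsupp

theorem integrable_compensatedDefault_and_integral_eq_zero [IsFiniteMeasure ν]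
    [NullSingletonClass ν] (t : ℝ≥0) :
    Integrable (compensatedDefault ν t) ν ∧ ∫ x, compensatedDefault ν t x ∂ν = 0 := by
  have hind : (fun x : ℝ≥0 => if x ≤ t then (1 : ℝ) else 0) = (Iic t).indicator 1 := by
    ext x; simp [indicator_apply]
  have hlin := lintegral_cumHazard_min hsupp t
  have hmeas : AEMeasurable (fun x => cumHazard ν (min t x)) ν :=
    ((measurable_cumHazard ν).comp (measurable_const.min measurable_id)).aemeasurable
  have hH : Integrable (fun x : ℝ≥0 => if x ≤ t then (1 : ℝ) else 0) ν := by
    rw [hind]; exact (integrable_const 1).indicator measurableSet_Iic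
  have hΛ : Integrable (fun x => (cumHazard ν (min t x)).toReal) ν :=
    integrable_toReal_of_lintegral_ne_top hmeas (hlin ▸ measure_ne_top ν _)
  refine ⟨hH.sub hΛ, ?_⟩
  unfold compensatedDefault
  rw [integral_sub hH hΛ, hind, integral_indicator_one measurableSet_Iic,
    integral_toReal hmeas (ae_of_all _ fun x => cumHazard_lt_top hsupp _), hlin, measureReal_def,
    sub_self]

theorem boundedVariationOn_compensatedDefault [IsFiniteMeasure ν] (x t : ℝ≥0) :
    BoundedVariationOn (fun s => compensatedDefault ν s x) (Iic t) := by
  have hH : Monotone fun s : ℝ≥0 => if x ≤ s then (1 : ℝ) else 0 := fun a b hab => by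
    dsimp only
    by_cases ha : x ≤ a
    · rw [if_pos ha, if_pos (ha.trans hab)]
    · rw [if_neg ha]; split_ifs <;> norm_num
  have hΛ : Monotone fun s => (cumHazard ν (min s x)).toReal := fun a b hab =>
    ENNReal.toReal_mono (cumHazard_lt_top hsupp _).ne (cumHazard_mono ν (min_le_min_right x hab))
  exact (hH.boundedVariationOn_Iic t).sub (hΛ.boundedVariationOn_Iic t)

theorem exists_compensatedDefault_lt [IsProbabilityMeasure ν] [NullSingletonClass ν] :
    ∃ t, ∀ x, t < x → compensatedDefault ν t x < compensatedDefault ν 0 x := by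
  obtain ⟨t, ht⟩ := ((tendsto_measure_Iic_atTop ν).eventually
    (lt_mem_nhds (by simp : (0 : ℝ≥0∞) < ν univ))).exists
  refine ⟨t, fun x hx => ?_⟩
  rw [compensatedDefault_of_lt hx, compensatedDefault_of_lt (zero_le.trans_lt hx),
    cumHazard_zero, ENNReal.toReal_zero, neg_zero, neg_lt_zero]
  exact ENNReal.toReal_pos (ht.trans_le (measure_Iic_le_cumHazard ν t)).ne'
    (cumHazard_lt_top hsupp t).ne

end CompensatedDefault

section DefaultSigma

variable {Ω : Type*}

noncomputable abbrev defaultSigma (τ : Ω → ℝ≥0) (r : ℝ≥0) : MeasurableSpace Ω :=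
  ⨆ v ∈ Iic r, MeasurableSpace.comap (fun ω => if τ ω ≤ v then (1 : ℝ) else 0) inferInstance

theorem measurableSet_defaultSigma {τ : Ω → ℝ≥0} {v r : ℝ≥0} (hv : v ≤ r) :
    MeasurableSet[defaultSigma τ r] {ω | τ ω ≤ v} := by
  refine le_iSup₂ (f := fun v (_ : v ∈ Iic r) => MeasurableSpace.comap
    (fun ω => if τ ω ≤ v then (1 : ℝ) else 0) inferInstance) v hv _
    ⟨{1}, measurableSet_singleton 1, ?_⟩
  ext ω
  by_cases h : τ ω ≤ v <;> simp [h]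

theorem measurable_compensatedDefault_defaultSigma (ν : Measure ℝ≥0) (τ : Ω → ℝ≥0) (t : ℝ≥0) :
    Measurable[defaultSigma τ t] fun ω => compensatedDefault ν t (τ ω) := by
  let := defaultSigma τ t
  have hmin : Measurable fun ω => min t (τ ω) := by
    refine measurable_of_Iic fun v => ?_
    rcases le_or_gt t v with htv | hvt
    · convert MeasurableSet.univ
      exact eq_univ_of_forall fun ω => min_le_of_left_le htv
    · convert measurableSet_defaultSigma hvt.le using 1
      ext ω
      simp [hvt.not_ge]
  exact (Measurable.ite (measurableSet_defaultSigma le_rfl) measurable_const measurable_const).sub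
    ((measurable_cumHazard ν).comp hmin).ennreal_toReal

theorem exists_inter_eq_of_measurableSet_sup_defaultSigma {m : MeasurableSpace Ω} {τ : Ω → ℝ≥0}
    {r : ℝ≥0} {A : Set Ω} (hA : MeasurableSet[m ⊔ defaultSigma τ r] A) :
    ∃ B, MeasurableSet[m] B ∧ τ ⁻¹' Ioi r ∩ A = τ ⁻¹' Ioi r ∩ B := by
  have htrace : (defaultSigma τ r).comap (Subtype.val : τ ⁻¹' Ioi r → Ω) = ⊥ := by
    simp only [defaultSigma, MeasurableSpace.comap_iSup, MeasurableSpace.comap_comp]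
    refine iSup₂_eq_bot.2 fun v hv => ?_
    convert MeasurableSpace.comap_const (0 : ℝ) using 2
    exact funext fun ω => if_neg ((mem_Iic.1 hv).trans_lt ω.2).not_ge
  have hA' : MeasurableSet[m.comap (Subtype.val : τ ⁻¹' Ioi r → Ω)] (Subtype.val ⁻¹' A) := by
    rw [← sup_bot_eq (m.comap _), ← htrace, ← MeasurableSpace.comap_sup]
    exact ⟨A, hA, rfl⟩
  obtain ⟨B, hB, hBA⟩ := hA'
  exact ⟨B, hB, (Subtype.preimage_coe_eq_preimage_coe_iff.1 hBA).symm⟩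

end DefaultSigma

section Martingale

variable {Ω E ι : Type*} {mΩ : MeasurableSpace Ω} {μ : Measure Ω} [IsFiniteMeasure μ]
  [NormedAddCommGroup E] [NormedSpace ℝ E] [CompleteSpace E]

theorem martingale_of_setIntegral_eq [Preorder ι] {f : ι → Ω → E} {ℱ : Filtration ι mΩ}
    (hadp : StronglyAdapted ℱ f) (hint : ∀ i, Integrable (f i) μ)
    (hf : ∀ i j, i ≤ j → ∀ s, MeasurableSet[ℱ i] s → ∫ ω in s, f i ω ∂μ = ∫ ω in s, f j ω ∂μ) :
    Martingale f ℱ μ :=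
  ⟨hadp, fun i j hij => (ae_eq_condExp_of_forall_setIntegral_eq (ℱ.le i) (hint j)
    (fun _ _ _ => (hint i).integrableOn) (fun s hs _ => hf i j hij s hs)
    (hadp i).aestronglyMeasurable).symm⟩

theorem MeasureTheory.Martingale.of_le_filtration [Preorder ι] {f : ι → Ω → E}
    {ℱ 𝒢 : Filtration ι mΩ}
    (h : Martingale f 𝒢 μ) (hle : ∀ i, ℱ i ≤ 𝒢 i) (hadp : StronglyAdapted ℱ f) :
    Martingale f ℱ μ :=
  ⟨hadp, fun i j hij => (condExp_condExp_of_le (hle i) (𝒢.le i)).symm.trans <|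
    (condExp_congr_ae (h.2 i j hij)).trans
      (condExp_of_stronglyMeasurable (ℱ.le i) (hadp i) (h.integrable i)).eventuallyEq⟩

theorem MeasureTheory.Martingale.ae_eq_of_stronglyMeasurable [Preorder ι] {f : ι → Ω → E}
    {ℱ : Filtration ι mΩ} (h : Martingale f ℱ μ) {i j : ι} (hij : i ≤ j)
    (hj : StronglyMeasurable[ℱ i] (f j)) : f j =ᵐ[μ] f i := by
  simpa only [condExp_of_stronglyMeasurable (ℱ.le i) hj (h.integrable j)] using
    h.condExp_ae_eq hij

theorem setIntegral_eq_zero_of_indep {m₁ m₂ : MeasurableSpace Ω} (hle₁ : m₁ ≤ mΩ)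
    (hle₂ : m₂ ≤ mΩ) (hindep : Indep m₁ m₂ μ) {g : Ω → E} (hg : StronglyMeasurable[m₁] g)
    (hgi : Integrable g μ) (hmean : ∫ ω, g ω ∂μ = 0) {B : Set Ω} (hB : MeasurableSet[m₂] B) :
    ∫ ω in B, g ω ∂μ = 0 := by
  rw [← setIntegral_condExp hle₂ hgi hB,
    integral_congr_ae (ae_restrict_of_ae (condExp_indep_eq hle₁ hle₂ hg hindep)), hmean,
    integral_zero]

end Martingale

section Progressive

variable {Ω : Type*} {mΩ : MeasurableSpace Ω} {μ : Measure Ω} {τ : Ω → ℝ≥0}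

theorem setIntegral_comp_eq_zero_of_progressive [IsFiniteMeasure μ] {m : MeasurableSpace Ω}
    (hm : m ≤ mΩ) (hτ : Measurable[mΩ] τ)
    (hindep : Indep (MeasurableSpace.comap τ inferInstance) m μ)
    {k : ℝ≥0 → ℝ} (hk : Measurable k) (hki : Integrable (fun ω => k (τ ω)) μ) {r : ℝ≥0}
    (hk0 : ∀ x ≤ r, k x = 0) (hmean : ∫ ω, k (τ ω) ∂μ = 0) {A : Set Ω}
    (hA : MeasurableSet[m ⊔ defaultSigma τ r] A) : ∫ ω in A, k (τ ω) ∂μ = 0 := by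
  obtain ⟨B, hB, hAB⟩ := exists_inter_eq_of_measurableSet_sup_defaultSigma hA
  have hsupport : ∀ s, ∫ ω in s, k (τ ω) ∂μ = ∫ ω in s ∩ τ ⁻¹' Ioi r, k (τ ω) ∂μ := fun s => by
    rw [← setIntegral_indicator (hτ measurableSet_Ioi)]
    congr with ω
    by_cases h : r < τ ω
    · simp [h]
    · simp [h, hk0 _ (not_lt.1 h)]
  rw [hsupport, inter_comm, hAB, inter_comm, ← hsupport]
  exact setIntegral_eq_zero_of_indep (MeasurableSpace.comap_le_iff_le_map.2 hτ) hm hindep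
    (hk.comp (comap_measurable τ)).stronglyMeasurable hki hmean hB

variable {ν : Measure ℝ≥0} [NullSingletonClass ν] (hsupp : ∀ t : ℝ≥0, 0 < ν (Ioi t))
include hsupp

theorem integrable_compensatedDefault_comp_and_integral_eq_zero [IsFiniteMeasure μ]
    (hτ : Measurable τ) (hν : μ.map τ = ν) (t : ℝ≥0) :
    Integrable (fun ω => compensatedDefault ν t (τ ω)) μ ∧
      ∫ ω, compensatedDefault ν t (τ ω) ∂μ = 0 := by
  subst hν
  obtain ⟨hi, h0⟩ := integrable_compensatedDefault_and_integral_eq_zero hsupp t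
  refine ⟨hi.comp_measurable hτ, ?_⟩
  rw [← integral_map hτ.aemeasurable hi.aestronglyMeasurable, h0]

theorem martingale_compensatedDefault [IsFiniteMeasure μ] (hτ : Measurable τ) (hν : μ.map τ = ν)
    {F 𝒢 : Filtration ℝ≥0 mΩ}
    (hindep : Indep (MeasurableSpace.comap τ inferInstance) (⨆ t, (F t : MeasurableSpace Ω)) μ)
    (h𝒢 : ∀ r, 𝒢 r = F r ⊔ defaultSigma τ r) :
    Martingale (fun t ω => compensatedDefault ν t (τ ω)) 𝒢 μ := by
  have hint := integrable_compensatedDefault_comp_and_integral_eq_zero hsupp hτ hν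
  refine martingale_of_setIntegral_eq (fun r => ?_) (fun t => (hint t).1) fun i j hij A hA => ?_
  · exact ((measurable_compensatedDefault_defaultSigma ν τ r).mono
      ((h𝒢 r).symm ▸ le_sup_right) le_rfl).stronglyMeasurable
  rw [eq_comm, ← sub_eq_zero, ← integral_sub (hint j).1.integrableOn (hint i).1.integrableOn]
  refine setIntegral_comp_eq_zero_of_progressive (F.le i) hτ
    (k := fun x => compensatedDefault ν j x - compensatedDefault ν i x)
    (indep_of_indep_of_le_right hindep (le_iSup _ i))
    ((measurable_compensatedDefault_apply ν j).sub (measurable_compensatedDefault_apply ν i))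
    ((hint j).1.sub (hint i).1)
    (fun x hx => sub_eq_zero.2 (compensatedDefault_eq_of_le_of_le hx hij))
    ?_ (h𝒢 i ▸ hA)
  rw [integral_sub (hint j).1 (hint i).1, (hint j).2, (hint i).2, sub_zero]

theorem not_martingale_compensatedDefault [IsFiniteMeasure μ] [IsProbabilityMeasure ν]
    (hν : μ.map τ = ν) {𝒢 : Filtration ℝ≥0 mΩ} (hτ : Measurable[𝒢 0] τ) :
    ¬ Martingale (fun t ω => compensatedDefault ν t (τ ω)) 𝒢 μ := by
  intro hM
  obtain ⟨t, ht⟩ := exists_compensatedDefault_lt hsupp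
  have hae := hM.ae_eq_of_stronglyMeasurable (zero_le : 0 ≤ t)
    ((measurable_compensatedDefault_apply ν t).comp hτ).stronglyMeasurable
  have hnull : μ (τ ⁻¹' Ioi t) = 0 :=
    measure_eq_zero_iff_ae_notMem.2 (hae.mono fun ω hω hlt => (ht _ hlt).ne hω)
  rw [← Measure.map_apply (hτ.mono (𝒢.le 0) le_rfl) measurableSet_Ioi, hν] at hnull
  exact (hsupp t).ne' hnull

end Progressive

section Predictable

variable {Ω : Type*} {mΩ : MeasurableSpace Ω} (F : Filtration ℝ≥0 mΩ)

theorem measurableSet_predSigma_Iic_prod {A : Set Ω} (hA : MeasurableSet[F 0] A) (v : ℝ≥0) :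
    MeasurableSet[predSigma F] (Iic v ×ˢ A) := by
  have hIic : Iic v = {0} ∪ Ioc 0 v := by
    ext x
    rcases eq_or_ne x 0 with rfl | hx <;> simp [*]
  rw [hIic, union_prod]
  exact (MeasurableSpace.measurableSet_generateFrom (Or.inl ⟨A, hA, rfl⟩)).union
    (MeasurableSpace.measurableSet_generateFrom (Or.inr ⟨0, v, A, hA, rfl⟩))

theorem measurable_fst_predSigma : Measurable[predSigma F] (Prod.fst : ℝ≥0 × Ω → ℝ≥0) := by
  let := predSigma F
  exact measurable_of_Iic fun v => by
    simpa only [prod_univ] using measurableSet_predSigma_Iic_prod F MeasurableSet.univ v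

theorem measurable_snd_predSigma : @Measurable _ _ (predSigma F) (F 0) Prod.snd := fun A hA => by
  have huniv : (univ : Set ℝ≥0) = ⋃ n : ℕ, Iic (n : ℝ≥0) :=
    (eq_univ_of_forall fun x => mem_iUnion.2 (exists_nat_ge x)).symm
  rw [← univ_prod, huniv, iUnion_prod_const]
  exact MeasurableSet.iUnion fun n => measurableSet_predSigma_Iic_prod F hA n

theorem measurable_predSigma_comp {β γ : Type*} [MeasurableSpace β] [MeasurableSpace γ]
    {φ : ℝ≥0 × β → γ} (hφ : Measurable φ) {τ : Ω → β} (hτ : Measurable[F 0] τ) :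
    Measurable[predSigma F] fun q : ℝ≥0 × Ω => φ (q.1, τ q.2) :=
  hφ.comp ((measurable_fst_predSigma F).prodMk (hτ.comp (measurable_snd_predSigma F)))

end Predictable

theorem stmt16_general {Ω : Type*} {mΩ : MeasurableSpace Ω} (μs : Measure Ω)
    [IsProbabilityMeasure μs]
    (F : Filtration ℝ≥0 mΩ) (τ : Ω → ℝ≥0) (hτ : Measurable τ)
    (ν : Measure ℝ≥0) (hνs : ν = μs.map τ)
    [NullSingletonClass ν] (hsupp : ∀ t : ℝ≥0, 0 < ν (Set.Ioi t))
    (hindep : ProbabilityTheory.Indep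
      (MeasurableSpace.comap τ inferInstance) (⨆ t, (F t : MeasurableSpace Ω)) μs)
    (𝒢 : Filtration ℝ≥0 mΩ)
    (h𝒢 : ∀ r, 𝒢 r = F r ⊔ ⨆ v ∈ Set.Iic r,
      MeasurableSpace.comap (fun ω => if τ ω ≤ v then (1 : ℝ) else 0) inferInstance)
    (𝒢τ : Filtration ℝ≥0 mΩ)
    (h𝒢τ : ∀ r, 𝒢τ r = F r ⊔ MeasurableSpace.comap τ inferInstance)
    (ℍ : Filtration ℝ≥0 mΩ)
    (hℍ : ∀ r, (ℍ r : MeasurableSpace Ω) = ⨆ v ∈ Set.Iic r,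
      MeasurableSpace.comap (fun ω => if τ ω ≤ v then (1 : ℝ) else 0) inferInstance)
    (Ms : ℝ≥0 → Ω → ℝ)
    (hMs : ∀ t ω, Ms t ω = (if τ ω ≤ t then (1 : ℝ) else 0) -
      ∫ s in Set.Iic (min t (τ ω)), ((ν (Set.Ioi s)).toReal)⁻¹ ∂ν) :
    Martingale Ms 𝒢 μs ∧
    ¬ Martingale Ms 𝒢τ μs ∧
    (∀ ω, ∀ t, BoundedVariationOn (fun s => Ms s ω) (Set.Iic t)) ∧
    Measurable[predSigma 𝒢τ] (fun q : ℝ≥0 × Ω => Ms q.1 q.2) ∧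
    ¬ (∀ Y : ℝ≥0 → Ω → ℝ, Martingale Y ℍ μs → Martingale Y 𝒢τ μs) := by
  have : IsProbabilityMeasure ν := hνs ▸ Measure.isProbabilityMeasure_map hτ.aemeasurable
  obtain rfl : Ms = fun t ω => compensatedDefault ν t (τ ω) :=
    funext₂ fun t ω => by rw [hMs, integral_inv_measure_Ioi hsupp]; rfl
  have hτ0 : Measurable[𝒢τ 0] τ := Measurable.of_comap_le ((h𝒢τ 0).symm ▸ le_sup_right)
  have hℍ𝒢 : ∀ r, ℍ r ≤ 𝒢 r := fun r => (hℍ r).trans_le ((h𝒢 r).symm ▸ le_sup_right)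
  have hℍadapted : StronglyAdapted ℍ fun t ω => compensatedDefault ν t (τ ω) := fun r =>
    ((measurable_compensatedDefault_defaultSigma ν τ r).mono (hℍ r).ge le_rfl).stronglyMeasurable
  have hmart := martingale_compensatedDefault hsupp hτ hνs.symm hindep h𝒢
  have hnot := not_martingale_compensatedDefault hsupp hνs.symm hτ0
  exact ⟨hmart, hnot, fun ω t => boundedVariationOn_compensatedDefault hsupp (τ ω) t,
    measurable_predSigma_comp 𝒢τ (measurable_compensatedDefault ν) hτ0,
    fun himm => hnot (himm _ (hmart.of_le_filtration hℍ𝒢 hℍadapted))⟩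

/-- Under `P*`, the process `M*_t = H_t − ∫_0^{t∧τ} λ*(s) ν(ds)`, with
`λ*(t) = 1/G*(t)`, `G*(t) = P(τ > t)`, is a `(P*, G)`-martingale; it is not a
`(P*, G^τ)`-martingale but is a bounded-variation `G^τ`-predictable process (hence a
`(P*, G^τ)`-semimartingale with null martingale part); in particular `H` is not immersed
in `G^τ` under `P*`. -/
theorem stmt16 {Ω : Type*} {mΩ : MeasurableSpace Ω} (μ μs : Measure Ω)
    [IsProbabilityMeasure μ] [IsProbabilityMeasure μs]
    (F : Filtration ℝ≥0 mΩ) (τ : Ω → ℝ≥0) (hτ : Measurable τ)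
    (ν : Measure ℝ≥0) (hν : ν = μ.map τ) (hνs : ν = μs.map τ)
    [NullSingletonClass ν] (hsupp : ∀ t : ℝ≥0, 0 < ν (Set.Ioi t))
    (hindep : ProbabilityTheory.Indep
      (MeasurableSpace.comap τ inferInstance) (⨆ t, (F t : MeasurableSpace Ω)) μs)
    (hagreeF : ∀ t, ∀ s : Set Ω, MeasurableSet[F t] s → μs s = μ s)
    (𝒢 : Filtration ℝ≥0 mΩ)
    (h𝒢 : ∀ r, 𝒢 r = F r ⊔ ⨆ v ∈ Set.Iic r,
      MeasurableSpace.comap (fun ω => if τ ω ≤ v then (1 : ℝ) else 0) inferInstance)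
    (𝒢τ : Filtration ℝ≥0 mΩ)
    (h𝒢τ : ∀ r, 𝒢τ r = F r ⊔ MeasurableSpace.comap τ inferInstance)
    (ℍ : Filtration ℝ≥0 mΩ)
    (hℍ : ∀ r, (ℍ r : MeasurableSpace Ω) = ⨆ v ∈ Set.Iic r,
      MeasurableSpace.comap (fun ω => if τ ω ≤ v then (1 : ℝ) else 0) inferInstance)
    (Ms : ℝ≥0 → Ω → ℝ)
    (hMs : ∀ t ω, Ms t ω = (if τ ω ≤ t then (1 : ℝ) else 0) -
      ∫ s in Set.Iic (min t (τ ω)), ((ν (Set.Ioi s)).toReal)⁻¹ ∂ν) :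
    Martingale Ms 𝒢 μs ∧
    ¬ Martingale Ms 𝒢τ μs ∧
    (∀ ω, ∀ t, BoundedVariationOn (fun s => Ms s ω) (Set.Iic t)) ∧
    Measurable[predSigma 𝒢τ] (fun q : ℝ≥0 × Ω => Ms q.1 q.2) ∧
    ¬ (∀ Y : ℝ≥0 → Ω → ℝ, Martingale Y ℍ μs → Martingale Y 𝒢τ μs) :=
  stmt16_general μs F τ hτ ν hνs hsupp hindep 𝒢 h𝒢 𝒢τ h𝒢τ ℍ hℍ Ms hMs
end
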